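/- arXiv:2410.06931 — 7 statements merged into one kernel-verified Lean document; each statement's English description precedes it below -/
import Mathlib

section
/- Let K ⊆ ℝ^d be a nonempty compact set, star-convex with respect to the origin, and set U := ℝ^d \ K. Let 0 < F₀ ≤ F₁ and Q > 0. Let u₀ : closure(U) → [0,∞) be continuous with u₀ = F₀ on ∂U, u₀ ≤ F₀ on closure(U), and assume that for every η ≥ 0 the superlevel set {u₀ > η} ∪ K is star-convex with respect to the origin. Let S be the set of all continuous v : closure(U) → [0,∞) such that v = F₁ on ∂U, v ≥ u₀, and v is a viscosity supersolution of the one-phase stability condition with slope bound Q on U. Assume that the pointwise infimum w(x) := inf{v(x) : v ∈ S} itself belongs to S. Then for every λ ∈ (0,1) and every x ∈ closure(U) with λx ∈ closure(U), one has w(λx) ≥ w(x); in particular, for every η ≥ 0 the set {w > η} ∪ K is star-convex with respect to the origin. -/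
open Set Metric Filter
open scoped RealInnerProductSpace Topology Pointwise

noncomputable section

abbrev Rd (d : ℕ) : Type := EuclideanSpace ℝ (Fin d)

/-- Laplacian as the trace of the Hessian (sum of pure second derivatives). -/
def lap {d : ℕ} (φ : Rd d → ℝ) (x : Rd d) : ℝ :=
  ∑ i : Fin d, fderiv ℝ (fun y => fderiv ℝ φ y (EuclideanSpace.single i (1:ℝ))) x
      (EuclideanSpace.single i (1:ℝ))

/-- viscosity subharmonic on a set -/
def ViscSubharmonicOn {d : ℕ} (f : Rd d → ℝ) (V : Set (Rd d)) : Prop :=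
  ∀ φ : Rd d → ℝ, ∀ x₀ ∈ V, ContDiffAt ℝ 2 φ x₀ →
    IsLocalMax (fun x => f x - φ x) x₀ → 0 ≤ lap φ x₀

/-- viscosity superharmonic on a set -/
def ViscSuperharmonicOn {d : ℕ} (f : Rd d → ℝ) (V : Set (Rd d)) : Prop :=
  ∀ φ : Rd d → ℝ, ∀ x₀ ∈ V, ContDiffAt ℝ 2 φ x₀ →
    IsLocalMin (fun x => f x - φ x) x₀ → lap φ x₀ ≤ 0

/-- positivity set -/
def PosSet {d : ℕ} (f : Rd d → ℝ) : Set (Rd d) := {x | 0 < f x}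

/-- superdifferential within the closure of the positivity set -/
def Dplus {d : ℕ} (f : Rd d → ℝ) (x₀ : Rd d) : Set (Rd d) :=
  {p | ∀ ε > (0:ℝ), ∃ δ > (0:ℝ), ∀ x ∈ closure (PosSet f),
      ‖x - x₀‖ < δ → f x ≤ ⟪p, x - x₀⟫ + ε * ‖x - x₀‖}

/-- subdifferential -/
def Dminus {d : ℕ} (f : Rd d → ℝ) (x₀ : Rd d) : Set (Rd d) :=
  {p | ∀ ε > (0:ℝ), ∃ δ > (0:ℝ), ∀ x : Rd d,
      ‖x - x₀‖ < δ → ⟪p, x - x₀⟫ - ε * ‖x - x₀‖ ≤ f x}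

/-- viscosity supersolution of the one-phase stability condition with slope bound Q -/
def IsSupersolStab {d : ℕ} (v : Rd d → ℝ) (U : Set (Rd d)) (Q : ℝ) : Prop :=
  ViscSuperharmonicOn v (PosSet v ∩ U) ∧
  ∀ x₀ ∈ frontier (PosSet v) ∩ U, ∀ p ∈ Dminus v x₀, ‖p‖ ^ 2 ≤ Q

/-- viscosity subsolution of the one-phase stability condition with slope bound Q -/
def IsSubsolStab {d : ℕ} (v : Rd d → ℝ) (U : Set (Rd d)) (Q : ℝ) : Prop :=
  ViscSubharmonicOn v (PosSet v ∩ U) ∧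
  ∀ x₀ ∈ frontier (PosSet v) ∩ U, ∀ p ∈ Dplus v x₀, Q ≤ ‖p‖ ^ 2

lemma secondDerivTest (f g : ℝ → ℝ) (c : ℝ)
    (hfg : ∀ᶠ t in 𝓝 (0:ℝ), HasDerivAt f (g t) t)
    (hg : HasDerivAt g c 0) (hmax : IsLocalMax f 0) : c ≤ 0 := by
  by_contra hc
  push_neg at hc
  have hg0 : g 0 = 0 := by
    have h1 : deriv f 0 = g 0 := hfg.self_of_nhds.deriv
    have h2 : deriv f 0 = 0 := hmax.deriv_eq_zero
    linarith
  have hslope : Tendsto (slope g 0) (𝓝[≠] (0:ℝ)) (𝓝 c) :=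
    hasDerivAt_iff_tendsto_slope.mp hg
  have hev : ∀ᶠ t in 𝓝[≠] (0:ℝ), c/2 < slope g 0 t :=
    hslope.eventually (eventually_gt_nhds (by linarith))
  rw [eventually_nhdsWithin_iff] at hev
  have hall : ∀ᶠ t in 𝓝 (0:ℝ), (t ∈ ({0}ᶜ : Set ℝ) → c/2 < slope g 0 t) ∧
      HasDerivAt f (g t) t ∧ f t ≤ f 0 := hev.and (hfg.and hmax)
  rcases Metric.eventually_nhds_iff_ball.mp hall with ⟨δ, hδ, hball⟩
  have hmem : ∀ t ∈ Set.Icc (0:ℝ) (δ/2), t ∈ Metric.ball (0:ℝ) δ := by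
    intro t ht
    rw [Metric.mem_ball, Real.dist_eq, sub_zero, abs_of_nonneg ht.1]
    linarith [ht.2]
  have hgpos : ∀ t ∈ Set.Ioo (0:ℝ) (δ/2), 0 < g t := by
    intro t ht
    have h := (hball t (hmem t ⟨le_of_lt ht.1, le_of_lt ht.2⟩)).1 (by simp [ne_of_gt ht.1])
    rw [slope_def_field, hg0, sub_zero, sub_zero] at h
    have h2 := (lt_div_iff₀ ht.1).mp h
    nlinarith [mul_pos (half_pos hc) ht.1]
  have hcont : ContinuousOn f (Set.Icc (0:ℝ) (δ/2)) := by
    intro t ht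
    exact ((hball t (hmem t ht)).2.1.continuousAt).continuousWithinAt
  have hderiv : ∀ t ∈ Set.Ioo (0:ℝ) (δ/2), 0 < deriv f t := by
    intro t ht
    rw [(hball t (hmem t ⟨le_of_lt ht.1, le_of_lt ht.2⟩)).2.1.deriv]
    exact hgpos t ht
  have hmono : StrictMonoOn f (Set.Icc (0:ℝ) (δ/2)) := by
    apply strictMonoOn_of_deriv_pos (convex_Icc _ _) hcont
    intro t ht
    rw [interior_Icc] at ht
    exact hderiv t ht
  have h1 : f 0 < f (δ/2) :=
    hmono ⟨le_refl _, by linarith⟩ ⟨by linarith, le_refl _⟩ (by linarith)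
  have h2 : f (δ/2) ≤ f 0 := (hball (δ/2) (hmem _ ⟨by linarith, le_refl _⟩)).2.2
  linarith

lemma eventually_diff {d : ℕ} {φ : Rd d → ℝ} {x₀ : Rd d} (hφ : ContDiffAt ℝ 2 φ x₀) :
    ∀ᶠ y in 𝓝 x₀, DifferentiableAt ℝ φ y := by
  obtain ⟨u, hu, hcd⟩ := hφ.contDiffOn le_rfl (by simp)
  rw [_root_.mem_nhds_iff] at hu
  obtain ⟨t, htu, hto, hxt⟩ := hu
  filter_upwards [hto.mem_nhds hxt] with y hy
  exact ((hcd.mono htu) y hy).contDiffAt (hto.mem_nhds hy) |>.differentiableAt two_ne_zero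

lemma hasFDerivAt_fderiv_apply {d : ℕ} {φ : Rd d → ℝ} {x₀ : Rd d} (hφ : ContDiffAt ℝ 2 φ x₀)
    (e : Rd d) :
    HasFDerivAt (fun y => fderiv ℝ φ y e)
      ((ContinuousLinearMap.apply ℝ ℝ e).comp (fderiv ℝ (fderiv ℝ φ) x₀)) x₀ := by
  have h1 : DifferentiableAt ℝ (fderiv ℝ φ) x₀ :=
    (hφ.fderiv_right (m := 1) (by norm_num)).differentiableAt one_ne_zero
  exact (ContinuousLinearMap.apply ℝ ℝ e).hasFDerivAt.comp x₀ h1.hasFDerivAt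

lemma lap_nonpos_of_localMax {d : ℕ} {φ : Rd d → ℝ} {x₀ : Rd d}
    (hφ : ContDiffAt ℝ 2 φ x₀) (hmax : IsLocalMax φ x₀) : lap φ x₀ ≤ 0 := by
  apply Finset.sum_nonpos
  intro i _
  set e : Rd d := EuclideanSpace.single i (1:ℝ) with he
  set γ : ℝ → Rd d := fun t => x₀ + t • e with hγ
  have hγc : Continuous γ := by continuity
  have hγ0 : γ 0 = x₀ := by simp [hγ]
  have hγd : ∀ t : ℝ, HasDerivAt γ e t := by
    intro t
    rw [hγ]; simpa using ((hasDerivAt_id t).smul_const e).const_add x₀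
  set f : ℝ → ℝ := fun t => φ (γ t) with hf
  set g : ℝ → ℝ := fun t => fderiv ℝ φ (γ t) e with hgdef
  have hfg : ∀ᶠ t in 𝓝 (0:ℝ), HasDerivAt f (g t) t := by
    have h2 : ∀ᶠ t in 𝓝 (0:ℝ), DifferentiableAt ℝ φ (γ t) := by
      have := (hγc.tendsto 0)
      rw [hγ0] at this
      exact this.eventually (eventually_diff hφ)
    filter_upwards [h2] with t ht
    exact (ht.hasFDerivAt.comp_hasDerivAt t (hγd t))
  have hgd : HasDerivAt g (fderiv ℝ (fun y => fderiv ℝ φ y e) x₀ e) 0 := by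
    have h3 := hasFDerivAt_fderiv_apply hφ e
    have h4 : HasDerivAt g (((ContinuousLinearMap.apply ℝ ℝ e).comp
        (fderiv ℝ (fderiv ℝ φ) x₀)) e) 0 := by
      have h3' : HasFDerivAt (fun y => fderiv ℝ φ y e) ((ContinuousLinearMap.apply ℝ ℝ e).comp
          (fderiv ℝ (fderiv ℝ φ) x₀)) (γ 0) := by rw [hγ0]; exact h3
      exact h3'.comp_hasDerivAt 0 (hγd 0)
    rwa [h3.fderiv]
  have hmaxf : IsLocalMax f 0 := by
    have h5 : IsLocalMax φ (γ 0) := by rwa [hγ0]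
    exact h5.comp_continuous hγc.continuousAt
  exact secondDerivTest f g _ hfg hgd hmaxf

lemma lap_comp_smul {d : ℕ} (φ : Rd d → ℝ) {c : ℝ} (x : Rd d)
    (hφ : ContDiffAt ℝ 2 φ (c • x)) :
    lap (fun y => φ (c • y)) x = c ^ 2 * lap φ (c • x) := by
  set ψ : Rd d → ℝ := fun y => φ (c • y) with hψ
  set M : Rd d →L[ℝ] Rd d := c • ContinuousLinearMap.id ℝ (Rd d) with hM
  have hMfun : ∀ y : Rd d, M y = c • y := fun y => rfl
  have hMd : ∀ y : Rd d, HasFDerivAt (fun z : Rd d => c • z) M y := by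
    intro y
    exact (ContinuousLinearMap.hasFDerivAt M : HasFDerivAt (fun z => M z) M y)
  have hsmul_cont : Continuous (fun y : Rd d => c • y) := continuous_const_smul c
  rw [lap, lap, Finset.mul_sum]
  apply Finset.sum_congr rfl
  intro i _
  set e : Rd d := EuclideanSpace.single i (1:ℝ) with he
  have hev : (fun y => fderiv ℝ ψ y e) =ᶠ[𝓝 x] (fun y => c * fderiv ℝ φ (c • y) e) := by
    have h2 : ∀ᶠ y in 𝓝 x, DifferentiableAt ℝ φ (c • y) :=
      ((hsmul_cont.tendsto x).eventually (eventually_diff hφ))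
    filter_upwards [h2] with y hy
    have hψy : HasFDerivAt ψ ((fderiv ℝ φ (c • y)).comp M) y :=
      hy.hasFDerivAt.comp y (hMd y)
    rw [hψy.fderiv]
    simp [hMfun, map_smul]
  have hA := hasFDerivAt_fderiv_apply hφ e
  have hB : HasFDerivAt (fun y => fderiv ℝ φ (c • y) e)
      (((ContinuousLinearMap.apply ℝ ℝ e).comp (fderiv ℝ (fderiv ℝ φ) (c • x))).comp M) x :=
    hA.comp x (hMd x)
  calc fderiv ℝ (fun y => fderiv ℝ ψ y e) x e
      = fderiv ℝ (fun y => c * fderiv ℝ φ (c • y) e) x e := by rw [hev.fderiv_eq]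
    _ = (c • fderiv ℝ (fun y => fderiv ℝ φ (c • y) e) x) e := by
        rw [fderiv_const_mul hB.differentiableAt c]
    _ = c * ((((ContinuousLinearMap.apply ℝ ℝ e).comp
          (fderiv ℝ (fderiv ℝ φ) (c • x))).comp M) e) := by
        rw [hB.fderiv]; rfl
    _ = c ^ 2 * (fderiv ℝ (fun z => fderiv ℝ φ z e) (c • x) e) := by
        rw [hA.fderiv]
        simp [hMfun, map_smul]
        ring_nf

/-- the Perron minimal supersolution over a star-shaped obstacle from below
preserves star-shapedness. -/
theorem perron_inf_starshaped
    {d : ℕ} (K : Set (Rd d)) (hKne : K.Nonempty) (hKcomp : IsCompact K)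
    (hKstar : StarConvex ℝ (0 : Rd d) K)
    (U : Set (Rd d)) (hUdef : U = Kᶜ)
    (F₀ F₁ Q : ℝ) (hF₀ : 0 < F₀) (hF₀₁ : F₀ ≤ F₁) (hQ : 0 < Q)
    (u₀ : Rd d → ℝ) (hu₀cont : ContinuousOn u₀ (closure U))
    (hu₀nn : ∀ x ∈ closure U, 0 ≤ u₀ x)
    (hu₀bd : ∀ x ∈ frontier U, u₀ x = F₀) (hu₀le : ∀ x ∈ closure U, u₀ x ≤ F₀)
    (hu₀star : ∀ η : ℝ, 0 ≤ η →
      StarConvex ℝ (0 : Rd d) ({x ∈ closure U | η < u₀ x} ∪ K))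
    (S : Set (Rd d → ℝ))
    (hS : S = {v : Rd d → ℝ | ContinuousOn v (closure U) ∧
      (∀ x ∈ closure U, 0 ≤ v x) ∧ (∀ x ∈ frontier U, v x = F₁) ∧
      (∀ x ∈ closure U, u₀ x ≤ v x) ∧ IsSupersolStab v U Q})
    (w : Rd d → ℝ) (hwinf : ∀ x, w x = sInf ((fun v : Rd d → ℝ => v x) '' S))
    (hwS : w ∈ S) :
    (∀ lam : ℝ, lam ∈ Set.Ioo (0:ℝ) 1 → ∀ x ∈ closure U,
      lam • x ∈ closure U → w x ≤ w (lam • x)) ∧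
    (∀ η : ℝ, 0 ≤ η → StarConvex ℝ (0 : Rd d) ({x ∈ closure U | η < w x} ∪ K)) := by
  classical
  have hF₁ : 0 < F₁ := lt_of_lt_of_le hF₀ hF₀₁
  have hUopen : IsOpen U := by rw [hUdef]; exact hKcomp.isClosed.isOpen_compl
  have h0K : (0 : Rd d) ∈ K := hKstar.mem hKne
  have hKscale : ∀ t : ℝ, 0 ≤ t → t ≤ 1 → ∀ y ∈ K, t • y ∈ K := by
    intro t ht0 ht1 y hy
    have := hKstar hy (a := 1 - t) (b := t) (by linarith) ht0 (by ring)
    simpa using this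
  have hfrK : frontier U ⊆ K := by
    intro y hy
    rcases hy with ⟨hy1, hy2⟩
    rw [hUopen.interior_eq] at hy2
    rw [hUdef] at hy2
    simpa using hy2
  have hfrcl : frontier U ⊆ closure U := by
    intro y hy; exact hy.1
  have hKcl_fr : ∀ y, y ∈ K → y ∈ closure U → y ∈ frontier U := by
    intro y hyK hycl
    refine ⟨hycl, ?_⟩
    rw [hUopen.interior_eq, hUdef]
    simpa using hyK
  -- unpack w ∈ S
  have hwS' := hwS
  rw [hS] at hwS'
  obtain ⟨hwc, hwnn, hwbd, hwu₀, hwsup⟩ := hwS'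
  -- lower-boundedness of the evaluation images
  have hbdd : ∀ x ∈ closure U, BddBelow ((fun v : Rd d → ℝ => v x) '' S) := by
    intro x hx
    refine ⟨0, ?_⟩
    rintro y ⟨v, hv, rfl⟩
    rw [hS] at hv
    exact hv.2.1 x hx
  have hwle_mem : ∀ v ∈ S, ∀ x ∈ closure U, w x ≤ v x := by
    intro v hv x hx
    rw [hwinf x]
    exact csInf_le (hbdd x hx) ⟨v, hv, rfl⟩
  -- the constant F₁ belongs to S
  have hconst : (fun _ : Rd d => F₁) ∈ S := by
    rw [hS]
    refine ⟨continuousOn_const, fun x _ => le_of_lt hF₁, fun x _ => rfl,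
      fun x hx => le_trans (hu₀le x hx) hF₀₁, ?_, ?_⟩
    · intro φ x₀ _ hφ hmin
      apply lap_nonpos_of_localMax hφ
      filter_upwards [hmin] with y hy
      have hy' : F₁ - φ x₀ ≤ F₁ - φ y := hy
      linarith
    · intro x₀ hx₀
      exfalso
      have hps : PosSet (fun _ : Rd d => F₁) = Set.univ := by
        ext y; simp [PosSet, hF₁]
      rw [hps, frontier_univ] at hx₀
      exact hx₀.1
  have hwle : ∀ x ∈ closure U, w x ≤ F₁ := fun x hx => hwle_mem _ hconst x hx
  -- monotonicity of u₀ along rays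
  have hu₀mono : ∀ lam : ℝ, lam ∈ Set.Ioo (0:ℝ) 1 → ∀ x ∈ closure U,
      lam • x ∈ closure U → u₀ x ≤ u₀ (lam • x) := by
    intro lam hlam x hx hlx
    by_contra hcon
    push_neg at hcon
    set η := u₀ (lam • x) with hη
    have hη0 : 0 ≤ η := hu₀nn _ hlx
    have hstar := hu₀star η hη0
    have hmemx : x ∈ {y ∈ closure U | η < u₀ y} ∪ K := Or.inl ⟨hx, hcon⟩
    have := hstar hmemx (a := 1 - lam) (b := lam) (by linarith [hlam.2]) (le_of_lt hlam.1)
      (by ring)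
    rw [smul_zero, zero_add] at this
    rcases this with h1 | h2
    · exact absurd h1.2 (lt_irrefl η)
    · have hfr := hKcl_fr _ h2 hlx
      have : η = F₀ := hu₀bd _ hfr
      have hxF₀ := hu₀le x hx
      rw [this] at hcon
      linarith
  -- MAIN PART 1
  have hpart1 : ∀ lam : ℝ, lam ∈ Set.Ioo (0:ℝ) 1 → ∀ x ∈ closure U,
      lam • x ∈ closure U → w x ≤ w (lam • x) := by
    intro lam hlam x hx hlx
    have hlam0 : (0:ℝ) < lam := hlam.1
    have hlamne : lam ≠ 0 := ne_of_gt hlam0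
    have hinv : ∀ y : Rd d, lam⁻¹ • (lam • y) = y := by
      intro y; rw [smul_smul, inv_mul_cancel₀ hlamne, one_smul]
    have hinv' : ∀ y : Rd d, lam • (lam⁻¹ • y) = y := by
      intro y; rw [smul_smul, mul_inv_cancel₀ hlamne, one_smul]
    set v : Rd d → ℝ := fun y => if lam • y ∈ closure U then w (lam • y) else F₁ with hv
    have hveq : ∀ y : Rd d, lam • y ∈ closure U → v y = w (lam • y) := by
      intro y h; simp only [hv]; exact if_pos h
    have hvne : ∀ y : Rd d, lam • y ∉ closure U → v y = F₁ := by
      intro y h; simp only [hv]; exact if_neg h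
    have hsmc : Continuous (fun y : Rd d => lam • y) := continuous_const_smul lam
    -- continuity of v everywhere
    have hvcont : Continuous v := by
      rw [continuous_iff_continuousAt]
      intro x₀
      by_cases hcase : lam • x₀ ∈ closure U
      · set s : Set (Rd d) := {y | lam • y ∈ closure U} with hs'
        have hs_cwa : ContinuousWithinAt v s x₀ := by
          have hcomp : ContinuousWithinAt (fun y => w (lam • y)) s x₀ := by
            apply ContinuousWithinAt.comp (hwc (lam • x₀) hcase) hsmc.continuousWithinAt
            intro y hy; exact hy
          apply hcomp.congr
          · intro y hy; exact hveq y hy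
          · exact hveq x₀ hcase
        have ht_cwa : ContinuousWithinAt v sᶜ x₀ := by
          by_cases hcl : x₀ ∈ closure sᶜ
          · have hfr2 : lam • x₀ ∈ frontier (closure U) := by
              rw [frontier_eq_closure_inter_closure]
              refine ⟨subset_closure hcase, ?_⟩
              have hsub : closure sᶜ ⊆ (fun y : Rd d => lam • y) ⁻¹' closure (closure U)ᶜ := by
                have : sᶜ = (fun y : Rd d => lam • y) ⁻¹' (closure U)ᶜ := rfl
                rw [this]
                exact hsmc.closure_preimage_subset _
              exact hsub hcl
            have hwF : w (lam • x₀) = F₁ := hwbd _ (frontier_closure_subset hfr2)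
            apply ContinuousWithinAt.congr (continuousWithinAt_const (b := F₁))
            · intro y hy
              exact hvne y hy
            · rw [hveq x₀ hcase, hwF]
          · exact continuousWithinAt_of_notMem_closure hcl
        have := hs_cwa.union ht_cwa
        rwa [Set.union_compl_self, continuousWithinAt_univ] at this
      · have hopen : IsOpen {y : Rd d | lam • y ∉ closure U} := by
          have : {y : Rd d | lam • y ∉ closure U} =
              (fun y : Rd d => lam • y) ⁻¹' (closure U)ᶜ := rfl
          rw [this]
          exact isClosed_closure.isOpen_compl.preimage hsmc
        have heq : v =ᶠ[𝓝 x₀] fun _ => F₁ := by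
          filter_upwards [hopen.mem_nhds hcase] with y hy
          exact hvne y hy
        exact (continuousAt_const (y := F₁)).congr heq.symm
    have hvle : ∀ y, v y ≤ F₁ := by
      intro y
      by_cases hy : lam • y ∈ closure U
      · rw [hveq y hy]; exact hwle _ hy
      · rw [hvne y hy]
    -- v ∈ S
    have hvS : v ∈ S := by
      rw [hS]
      refine ⟨hvcont.continuousOn, ?_, ?_, ?_, ?_⟩
      · intro y hy
        by_cases h : lam • y ∈ closure U
        · rw [hveq y h]; exact hwnn _ h
        · rw [hvne y h]; exact le_of_lt hF₁
      · intro y hy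
        have hyK : y ∈ K := hfrK hy
        have hlyK : lam • y ∈ K := hKscale lam (le_of_lt hlam.1) (le_of_lt hlam.2) y hyK
        by_cases h : lam • y ∈ closure U
        · rw [hveq y h]
          exact hwbd _ (hKcl_fr _ hlyK h)
        · rw [hvne y h]
      · intro y hy
        by_cases h : lam • y ∈ closure U
        · rw [hveq y h]
          exact le_trans (hu₀mono lam hlam y hy h) (hwu₀ _ h)
        · rw [hvne y h]
          exact le_trans (hu₀le y hy) hF₀₁
      · refine ⟨?_, ?_⟩
        · -- superharmonicity
          intro φ x₀ hx₀ hφ hmin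
          obtain ⟨hx₀pos, hx₀U⟩ := hx₀
          by_cases hU' : lam • x₀ ∈ U
          · have hclU' : lam • x₀ ∈ closure U := subset_closure hU'
            have hval : v x₀ = w (lam • x₀) := hveq x₀ hclU'
            set ψ : Rd d → ℝ := fun y => φ (lam⁻¹ • y) with hψ
            have hψcd : ContDiffAt ℝ 2 ψ (lam • x₀) := by
              have hsm : ContDiff ℝ 2 (fun y : Rd d => lam⁻¹ • y) := contDiff_id.const_smul _
              have hφ' : ContDiffAt ℝ 2 φ (lam⁻¹ • (lam • x₀)) := by rw [hinv]; exact hφ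
              exact hφ'.comp _ hsm.contDiffAt
            have hminψ : IsLocalMin (fun y => w y - ψ y) (lam • x₀) := by
              have htend : Tendsto (fun y : Rd d => lam⁻¹ • y) (𝓝 (lam • x₀)) (𝓝 x₀) := by
                have := (continuous_const_smul (lam⁻¹ : ℝ)).tendsto (lam • x₀)
                rwa [hinv] at this
              have ev1 := htend.eventually hmin
              filter_upwards [ev1, hUopen.mem_nhds hU'] with y h1 h2
              replace h1 : v x₀ - φ x₀ ≤ v (lam⁻¹ • y) - φ (lam⁻¹ • y) := h1
              have hy1 : v (lam⁻¹ • y) = w y := by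
                have h3 : lam • (lam⁻¹ • y) ∈ closure U := by
                  rw [hinv' y]; exact subset_closure h2
                rw [hveq _ h3, hinv' y]
              rw [hy1] at h1
              show w (lam • x₀) - ψ (lam • x₀) ≤ w y - ψ y
              simp only [hψ]
              calc w (lam • x₀) - φ (lam⁻¹ • (lam • x₀)) = v x₀ - φ x₀ := by rw [hval, hinv]
                _ ≤ w y - φ (lam⁻¹ • y) := h1
            have hsup := hwsup.1 ψ (lam • x₀)
              ⟨by have h4 : (0:ℝ) < v x₀ := hx₀pos
                  rw [hval] at h4; exact h4, hU'⟩ hψcd hminψ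
            have hlap := lap_comp_smul φ (c := lam⁻¹) (lam • x₀) (by rw [hinv]; exact hφ)
            rw [hinv] at hlap
            rw [show ψ = fun y => φ (lam⁻¹ • y) from rfl] at hsup
            rw [hlap] at hsup
            nlinarith [pow_pos (inv_pos.mpr hlam0) 2]
          · have hvx₀ : v x₀ = F₁ := by
              have hlyK : lam • x₀ ∈ K := by
                rw [hUdef] at hU'; simpa using hU'
              by_cases h : lam • x₀ ∈ closure U
              · rw [hveq x₀ h]
                exact hwbd _ (hKcl_fr _ hlyK h)
              · rw [hvne x₀ h]
            apply lap_nonpos_of_localMax hφ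
            filter_upwards [hmin] with y hy
            replace hy : v x₀ - φ x₀ ≤ v y - φ y := hy
            have := hvle y
            rw [hvx₀] at hy
            show φ y ≤ φ x₀
            linarith
        · -- slope condition
          intro x₀ hx₀ p hp
          obtain ⟨hfr, hx₀U⟩ := hx₀
          have hv0 : v x₀ = 0 := by
            have hopen : IsOpen (PosSet v) := by
              have : PosSet v = v ⁻¹' Set.Ioi 0 := rfl
              rw [this]; exact isOpen_Ioi.preimage hvcont
            have h1 : x₀ ∉ PosSet v := by
              intro hmem
              rw [hopen.frontier_eq] at hfr
              exact hfr.2 hmem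
            have h2 : 0 ≤ v x₀ := by
              by_cases h : lam • x₀ ∈ closure U
              · rw [hveq x₀ h]; exact hwnn _ h
              · rw [hvne x₀ h]; exact le_of_lt hF₁
            have h3 : ¬ (0 < v x₀) := h1
            linarith [lt_or_ge 0 (v x₀) |>.resolve_left h3]
          have hclU' : lam • x₀ ∈ closure U := by
            by_contra h
            rw [hvne x₀ h] at hv0
            linarith
          have hwlx : w (lam • x₀) = 0 := by
            rwa [hveq x₀ hclU'] at hv0
          have hU' : lam • x₀ ∈ U := by
            by_contra h
            have hlyK : lam • x₀ ∈ K := by rw [hUdef] at h; simpa using h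
            have := hwbd _ (hKcl_fr _ hlyK hclU')
            rw [hwlx] at this
            linarith
          obtain ⟨r, hr, hball⟩ := Metric.isOpen_iff.mp hUopen _ hU'
          have hfrw : lam • x₀ ∈ frontier (PosSet w) := by
            constructor
            · rw [_root_.mem_closure_iff]
              intro o ho hmem
              have hx₀cl : x₀ ∈ closure (PosSet v) := hfr.1
              have ho' : IsOpen ((fun y : Rd d => lam • y) ⁻¹' (o ∩ U)) :=
                (ho.inter hUopen).preimage hsmc
              have hx₀mem : x₀ ∈ (fun y : Rd d => lam • y) ⁻¹' (o ∩ U) := ⟨hmem, hU'⟩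
              obtain ⟨z, hz1, hz2⟩ := _root_.mem_closure_iff.mp hx₀cl _ ho' hx₀mem
              refine ⟨lam • z, hz1.1, ?_⟩
              have : v z = w (lam • z) := hveq z (subset_closure hz1.2)
              rw [PosSet, Set.mem_setOf_eq, ← this]
              exact hz2
            · intro hmem
              have : lam • x₀ ∈ PosSet w := interior_subset hmem
              rw [PosSet, Set.mem_setOf_eq, hwlx] at this
              exact lt_irrefl 0 this
          set q : Rd d := lam⁻¹ • p with hq'
          have hq : q ∈ Dminus w (lam • x₀) := by
            intro ε hε
            obtain ⟨δ, hδ, hd⟩ := hp (lam * ε) (mul_pos hlam0 hε)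
            refine ⟨min (lam * δ) r, lt_min (mul_pos hlam0 hδ) hr, ?_⟩
            intro y hy
            have hyU : y ∈ U := by
              apply hball
              rw [Metric.mem_ball, dist_eq_norm]
              exact lt_of_lt_of_le hy (min_le_right _ _)
            set z : Rd d := lam⁻¹ • y with hz'
            have hz : lam • z = y := hinv' y
            have hzx : z - x₀ = lam⁻¹ • (y - lam • x₀) := by
              rw [smul_sub, hz', hinv]
            have hnorm : ‖z - x₀‖ = lam⁻¹ * ‖y - lam • x₀‖ := by
              rw [hzx, norm_smul, Real.norm_eq_abs, abs_of_pos (inv_pos.mpr hlam0)]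
            have hzd : ‖z - x₀‖ < δ := by
              rw [hnorm]
              have h1 : ‖y - lam • x₀‖ < lam * δ := lt_of_lt_of_le hy (min_le_left _ _)
              have h2 := mul_lt_mul_of_pos_left h1 (inv_pos.mpr hlam0)
              rwa [← mul_assoc, inv_mul_cancel₀ hlamne, one_mul] at h2
            have := hd z hzd
            have hvz : v z = w y := by
              have h3 : lam • z ∈ closure U := by rw [hz]; exact subset_closure hyU
              rw [hveq z h3, hz]
            rw [hvz] at this
            have hip : ⟪p, z - x₀⟫ = lam⁻¹ * ⟪p, y - lam • x₀⟫ := by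
              rw [hzx, real_inner_smul_right]
            have hipq : ⟪q, y - lam • x₀⟫ = lam⁻¹ * ⟪p, y - lam • x₀⟫ := by
              rw [hq', real_inner_smul_left]
            rw [hip, hnorm] at this
            rw [hipq]
            calc lam⁻¹ * ⟪p, y - lam • x₀⟫ - ε * ‖y - lam • x₀‖
                = lam⁻¹ * ⟪p, y - lam • x₀⟫ - lam * ε * (lam⁻¹ * ‖y - lam • x₀‖) := by
                  field_simp
              _ ≤ w y := this
          have hQq := hwsup.2 (lam • x₀) ⟨hfrw, hU'⟩ q hq
          have hpq : p = lam • q := by rw [hq', hinv']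
          have hnp : ‖p‖ = lam * ‖q‖ := by
            rw [hpq, norm_smul, Real.norm_eq_abs, abs_of_pos hlam0]
          rw [hnp]
          have hq2 : ‖q‖^2 ≤ Q := hQq
          have hl2 : lam^2 ≤ 1 := by nlinarith [hlam.2, hlam0]
          calc (lam * ‖q‖)^2 = lam^2 * ‖q‖^2 := by ring
            _ ≤ 1 * ‖q‖^2 := by nlinarith [sq_nonneg ‖q‖]
            _ = ‖q‖^2 := one_mul _
            _ ≤ Q := hq2
    -- conclude
    have hvx : v x = w (lam • x) := hveq x hlx
    rw [← hvx]
    exact hwle_mem v hvS x hx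
  refine ⟨hpart1, ?_⟩
  -- PART 2
  intro η hη
  intro y hy a b ha hb hab
  rw [smul_zero, zero_add]
  rcases hy with hyW | hyK
  · rcases eq_or_lt_of_le hb with hb1 | hblt
    · rw [← hb1, zero_smul]
      exact Or.inr h0K
    · rcases eq_or_lt_of_le (show b ≤ 1 by linarith) with hb2 | hb2
      · rw [hb2, one_smul]
        exact Or.inl hyW
      · by_cases hbK : b • y ∈ K
        · exact Or.inr hbK
        · have hbU : b • y ∈ U := by rw [hUdef]; simpa using hbK
          have hbcl : b • y ∈ closure U := subset_closure hbU
          have := hpart1 b ⟨hblt, hb2⟩ y hyW.1 hbcl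
          exact Or.inl ⟨hbcl, lt_of_lt_of_le hyW.2 this⟩
  · have := hKstar hyK ha hb hab
    rw [smul_zero, zero_add] at this
    exact Or.inr this
end
end

section
/- Let K ⊆ ℝ^d be a nonempty compact set, star-convex with respect to the origin, set U := ℝ^d \ K, and let R > 0 with K ⊆ closed ball B(0,R). Let 0 < F_s < F_t, λ := F_s/F_t ∈ (0,1), Q > 0 and L ≥ 0. Let u_s : closure(U) → [0,∞) be continuous, L-Lipschitz, with u_s = F_s on ∂U, u_s ≤ F_s on closure(U), {u_s > 0} ⊆ B(0,R), u_s a viscosity supersolution of the one-phase stability condition with slope bound Q on U, and with star-shaped profile: u_s(μx) ≥ u_s(x) whenever μ ∈ (0,1) and both x and μx lie in closure(U). Let S_t be the set of all continuous v : closure(U) → [0,∞) with v = F_t on ∂U, v ≥ u_s, and v a viscosity supersolution of the one-phase stability condition with slope bound Q on U. Then the function v̂ defined by v̂(x) := λ⁻¹ u_s(λx) if λx ∈ closure(U) and v̂(x) := F_t otherwise belongs to S_t, and consequently the pointwise infimum w(x) := inf{v(x) : v ∈ S_t} satisfies u_s(x) ≤ w(x) ≤ u_s(x) + (1 + L R /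 F_s)(F_t − F_s) for every x ∈ closure(U). -/
open Set Metric Filter
open scoped RealInnerProductSpace Topology Pointwise Classical

noncomputable section

section ObstacleHelpers

variable {d : ℕ}

lemma deriv2_nonpos_1d {g G : ℝ → ℝ} {c r : ℝ} (hr : 0 < r)
    (hg : ∀ t : ℝ, |t| < r → HasDerivAt g (G t) t)
    (hG : HasDerivAt G c 0) (hmax : IsLocalMax g 0) : c ≤ 0 := by
  by_contra hc
  push_neg at hc
  have hG0 : G 0 = 0 := by
    have h1 : deriv g 0 = G 0 := (hg 0 (by simpa using hr)).deriv
    have h2 : deriv g 0 = 0 := hmax.deriv_eq_zero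
    linarith
  have hslope : Tendsto (slope G 0) (𝓝[≠] (0:ℝ)) (𝓝 c) :=
    hasDerivAt_iff_tendsto_slope.1 hG
  have hev : ∀ᶠ t in 𝓝[≠] (0:ℝ), 0 < slope G 0 t :=
    hslope.eventually (eventually_gt_nhds hc)
  rw [eventually_nhdsWithin_iff] at hev
  rw [Metric.eventually_nhds_iff] at hev
  obtain ⟨ε, hε, hball⟩ := hev
  set a : ℝ := min ε r / 2 with ha
  have ha0 : 0 < a := by positivity
  have haε : a < ε := by
    have : min ε r ≤ ε := min_le_left _ _
    simp only [ha]; linarith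
  have har : a < r := by
    have : min ε r ≤ r := min_le_right _ _
    simp only [ha]; linarith
  have hGpos : ∀ t ∈ Ioo (0:ℝ) a, 0 < G t := by
    intro t ht
    have h1 : dist t 0 < ε := by
      rw [Real.dist_eq, sub_zero, abs_of_pos ht.1]; linarith [ht.2]
    have h2 := hball h1 (by simp [ne_of_gt ht.1])
    rw [slope_def_field, hG0, sub_zero, sub_zero] at h2
    have := (div_pos_iff).1 h2
    rcases this with ⟨h, _⟩ | ⟨_, h⟩
    · exact h
    · linarith [ht.1]
  have hmono : StrictMonoOn g (Icc 0 a) := by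
    apply strictMonoOn_of_deriv_pos (convex_Icc 0 a)
    · intro t ht
      exact (hg t (by rw [abs_lt]; constructor <;> [linarith [ht.1]; linarith [ht.2]])).continuousAt.continuousWithinAt
    · intro t ht
      rw [interior_Icc] at ht
      rw [(hg t (by rw [abs_lt]; constructor <;> [linarith [ht.1]; linarith [ht.2]])).deriv]
      exact hGpos t ht
  obtain ⟨ε', hε', hm⟩ := Metric.eventually_nhds_iff.1 hmax
  set t : ℝ := min a ε' / 2 with htdef
  have ht0 : 0 < t := by positivity
  have hta : t ≤ a := by
    have : min a ε' ≤ a := min_le_left _ _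
    simp only [htdef]; linarith
  have htε' : t < ε' := by
    have : min a ε' ≤ ε' := min_le_right _ _
    simp only [htdef]; linarith
  have h1 : g 0 < g t := hmono ⟨le_rfl, ha0.le⟩ ⟨ht0.le, hta⟩ ht0
  have h2 : g t ≤ g 0 := hm (by rw [Real.dist_eq, sub_zero, abs_of_pos ht0]; exact htε')
  linarith

lemma fderiv_fderiv_apply {φ : Rd d → ℝ} {z : Rd d}
    (hB : DifferentiableAt ℝ (fderiv ℝ φ) z) (e v : Rd d) :
    fderiv ℝ (fun y => fderiv ℝ φ y e) z v = fderiv ℝ (fderiv ℝ φ) z v e := by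
  have h := hB.hasFDerivAt.clm_apply (hasFDerivAt_const e z)
  rw [h.fderiv]
  simp

-- differentiability on an open nbhd from ContDiffAt 2
lemma exists_open_diff {φ : Rd d → ℝ} {z : Rd d} (hφ : ContDiffAt ℝ 2 φ z) :
    ∃ V : Set (Rd d), IsOpen V ∧ z ∈ V ∧ ∀ y ∈ V, DifferentiableAt ℝ φ y := by
  obtain ⟨u, hu, hcd⟩ := hφ.contDiffOn (m := 2) le_rfl (by simp)
  obtain ⟨V, hVu, hVo, hzV⟩ := _root_.mem_nhds_iff.1 hu
  refine ⟨V, hVo, hzV, fun y hy => ?_⟩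
  have : DifferentiableOn ℝ φ V := ((hcd.mono hVu).differentiableOn (by norm_num))
  exact (this y hy).differentiableAt (hVo.mem_nhds hy)

lemma lap_nonpos_of_isLocalMax {φ : Rd d → ℝ} {x₀ : Rd d}
    (hφ : ContDiffAt ℝ 2 φ x₀) (hmax : IsLocalMax φ x₀) : lap φ x₀ ≤ 0 := by
  have hB : DifferentiableAt ℝ (fderiv ℝ φ) x₀ :=
    (hφ.fderiv_right (m := 1) (by norm_num)).differentiableAt (by norm_num)
  obtain ⟨V, hVo, hx₀V, hdiff⟩ := exists_open_diff hφ
  apply Finset.sum_nonpos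
  intro i _
  set e : Rd d := EuclideanSpace.single i (1:ℝ) with he
  have hnorme : ‖e‖ = 1 := by simp [he, EuclideanSpace.norm_single]
  rw [fderiv_fderiv_apply hB e e]
  obtain ⟨r, hr, hball⟩ := Metric.isOpen_iff.1 hVo x₀ hx₀V
  have hline : ∀ t : ℝ, HasDerivAt (fun s : ℝ => x₀ + s • e) e t := by
    intro t
    simpa using ((hasDerivAt_id t).smul_const e).const_add x₀
  set g : ℝ → ℝ := fun t => φ (x₀ + t • e) with hg
  set G : ℝ → ℝ := fun t => fderiv ℝ φ (x₀ + t • e) e with hGdef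
  have hmem : ∀ t : ℝ, |t| < r → x₀ + t • e ∈ V := by
    intro t ht
    apply hball
    rw [mem_ball, dist_eq_norm]
    simp only [add_sub_cancel_left]
    rw [norm_smul, hnorme, mul_one]
    exact ht
  have hgd : ∀ t : ℝ, |t| < r → HasDerivAt g (G t) t := by
    intro t ht
    exact HasFDerivAt.comp_hasDerivAt_of_eq t (hdiff _ (hmem t ht)).hasFDerivAt (hline t) rfl
  have hGd : HasDerivAt G (fderiv ℝ (fderiv ℝ φ) x₀ e e) 0 := by
    have h1 := hB.hasFDerivAt.clm_apply (hasFDerivAt_const e x₀)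
    have h0 : x₀ + (0:ℝ) • e = x₀ := by simp
    have h2 := HasFDerivAt.comp_hasDerivAt_of_eq (0:ℝ) h1 (hline 0) (by simp)
    refine (h2 : HasDerivAt G _ 0).congr_deriv ?_
    simp
  have hgmax : IsLocalMax g 0 := by
    have hcont : Tendsto (fun t : ℝ => x₀ + t • e) (𝓝 0) (𝓝 x₀) := by
      have := (hline 0).continuousAt.tendsto
      simpa using this
    have hev : ∀ᶠ t in 𝓝 (0:ℝ), φ (x₀ + t • e) ≤ φ x₀ := hcont.eventually hmax
    refine hev.mono fun t ht => ?_
    simpa [hg] using ht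
  exact deriv2_nonpos_1d hr hgd hGd hgmax

lemma lap_scale {φ : Rd d → ℝ} (b c : ℝ) (hc : c ≠ 0) {x₀ : Rd d}
    (hφ : ContDiffAt ℝ 2 φ (c • x₀)) :
    lap (fun y => b * φ (c • y)) x₀ = b * c ^ 2 * lap φ (c • x₀) := by
  obtain ⟨V, hVo, hmemV, hdiff⟩ := exists_open_diff hφ
  have hB : DifferentiableAt ℝ (fderiv ℝ φ) (c • x₀) :=
    (hφ.fderiv_right (m := 1) (by norm_num)).differentiableAt (by norm_num)
  set B := fderiv ℝ (fderiv ℝ φ) (c • x₀) with hBdef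
  have hsm : ∀ y : Rd d, HasFDerivAt (fun z : Rd d => c • z)
      (c • ContinuousLinearMap.id ℝ (Rd d)) y := fun y => (hasFDerivAt_id y).const_smul c
  set W : Set (Rd d) := (fun y : Rd d => c • y) ⁻¹' V with hW
  have hWo : IsOpen W := hVo.preimage (continuous_const_smul c)
  have hx₀W : x₀ ∈ W := hmemV
  have hψd : ∀ y ∈ W, fderiv ℝ (fun z => b * φ (c • z)) y
      = b • ((fderiv ℝ φ (c • y)).comp (c • ContinuousLinearMap.id ℝ (Rd d))) := by
    intro y hy
    have h1 : HasFDerivAt (fun z : Rd d => φ (c • z))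
        ((fderiv ℝ φ (c • y)).comp (c • ContinuousLinearMap.id ℝ (Rd d))) y :=
      HasFDerivAt.comp y (hdiff _ hy).hasFDerivAt (hsm y)
    exact (h1.const_mul b).fderiv
  rw [lap, lap, Finset.mul_sum]
  apply Finset.sum_congr rfl
  intro i _
  set e : Rd d := EuclideanSpace.single i (1:ℝ) with he
  have hEv : (fun y => fderiv ℝ (fun z => b * φ (c • z)) y e)
      =ᶠ[𝓝 x₀] fun y => (b * c) * fderiv ℝ φ (c • y) e := by
    filter_upwards [hWo.mem_nhds hx₀W] with y hy
    rw [hψd y hy]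
    simp [ContinuousLinearMap.smul_apply, map_smul, smul_eq_mul]
    ring
  have hF : HasFDerivAt (fun z : Rd d => fderiv ℝ φ z e)
      ((fderiv ℝ φ (c • x₀)).comp (0 : Rd d →L[ℝ] Rd d) + B.flip e) (c • x₀) :=
    hB.hasFDerivAt.clm_apply (hasFDerivAt_const e _)
  have hcomp : HasFDerivAt (fun y : Rd d => fderiv ℝ φ (c • y) e)
      ((((fderiv ℝ φ (c • x₀)).comp (0 : Rd d →L[ℝ] Rd d) + B.flip e)).comp
        (c • ContinuousLinearMap.id ℝ (Rd d))) x₀ :=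
    HasFDerivAt.comp x₀ hF (hsm x₀)
  have hmul := hcomp.const_mul (b * c)
  have hL : fderiv ℝ (fun y => fderiv ℝ (fun z => b * φ (c • z)) y e) x₀ e
      = b * c ^ 2 * (B e e) := by
    rw [hEv.fderiv_eq, hmul.fderiv]
    simp [ContinuousLinearMap.smul_apply, map_smul, smul_eq_mul]
    ring
  rw [hL, fderiv_fderiv_apply hB e e]

end ObstacleHelpers

set_option maxHeartbeats 3200000 in
/-- one increasing step of the minimal-supersolution obstacle evolution of a
star-shaped droplet is Lipschitz in the forcing: the rescaled dilation `v̂` of `u_s` is an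
admissible supersolution for the forcing value `F_t`, and the Perron infimum `w` satisfies
`u_s ≤ w ≤ u_s + (1 + L R / F_s)(F_t − F_s)`. -/
theorem lipschitz_in_time_step
    {d : ℕ} (K : Set (Rd d)) (hKne : K.Nonempty) (hKcomp : IsCompact K)
    (hKstar : StarConvex ℝ (0 : Rd d) K)
    (U : Set (Rd d)) (hUdef : U = Kᶜ)
    (R : ℝ) (hR : 0 < R) (hKR : K ⊆ Metric.closedBall (0 : Rd d) R)
    (Fs Ft Q L : ℝ) (hFs : 0 < Fs) (hFst : Fs < Ft) (hQ : 0 < Q) (hL : 0 ≤ L)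
    (us : Rd d → ℝ) (huscont : ContinuousOn us (closure U))
    (husnn : ∀ x ∈ closure U, 0 ≤ us x)
    (husLip : ∀ x ∈ closure U, ∀ y ∈ closure U, |us x - us y| ≤ L * ‖x - y‖)
    (husbd : ∀ x ∈ frontier U, us x = Fs) (husle : ∀ x ∈ closure U, us x ≤ Fs)
    (hussupp : PosSet us ⊆ Metric.closedBall (0 : Rd d) R)
    (hussol : IsSupersolStab us U Q)
    (husstar : ∀ μ : ℝ, μ ∈ Set.Ioo (0:ℝ) 1 → ∀ x ∈ closure U,
      μ • x ∈ closure U → us x ≤ us (μ • x))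
    (St : Set (Rd d → ℝ))
    (hSt : St = {v : Rd d → ℝ | ContinuousOn v (closure U) ∧
      (∀ x ∈ closure U, 0 ≤ v x) ∧ (∀ x ∈ frontier U, v x = Ft) ∧
      (∀ x ∈ closure U, us x ≤ v x) ∧ IsSupersolStab v U Q})
    (vhat : Rd d → ℝ)
    (hvhat : ∀ x : Rd d, vhat x = if (Fs / Ft) • x ∈ closure U
      then (Fs / Ft)⁻¹ * us ((Fs / Ft) • x) else Ft)
    (w : Rd d → ℝ) (hw : ∀ x, w x = sInf ((fun v : Rd d → ℝ => v x) '' St)) :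
    vhat ∈ St ∧ ∀ x ∈ closure U,
      us x ≤ w x ∧ w x ≤ us x + (1 + L * R / Fs) * (Ft - Fs) := by
  have hFt : 0 < Ft := hFs.trans hFst
  set lam : ℝ := Fs / Ft with hlamdef
  have hlam0 : 0 < lam := div_pos hFs hFt
  have hlam1 : lam < 1 := (div_lt_one hFt).2 hFst
  have hlamne : lam ≠ 0 := ne_of_gt hlam0
  have hlaminv : lam⁻¹ * Fs = Ft := by rw [hlamdef, inv_div, div_mul_cancel₀ _ hFs.ne']
  have hlaminv1 : 1 ≤ lam⁻¹ := by
    have := inv_anti₀ hlam0 hlam1.le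
    simpa using this
  -- basic geometry
  have hKclosed : IsClosed K := hKcomp.isClosed
  have hUopen : IsOpen U := by rw [hUdef]; exact hKclosed.isOpen_compl
  have hUclos : U ⊆ closure U := subset_closure
  have hfrsub : frontier U ⊆ closure U := frontier_subset_closure
  have hclosK : ∀ x : Rd d, x ∈ closure U → x ∈ K → x ∈ frontier U := by
    intro x hx hxK
    rw [hUdef, frontier_compl]
    constructor
    · exact subset_closure hxK
    · rw [hUdef, closure_compl] at hx
      exact hx
  have hmemU : ∀ x : Rd d, x ∈ closure U → x ∉ frontier U → x ∈ U := by
    intro x hx hfx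
    by_contra hxU
    have hxK : x ∈ K := by
      rw [hUdef] at hxU; simpa using hxU
    exact hfx (hclosK x hx hxK)
  -- basic facts about vhat
  have hvhat_leFt : ∀ x : Rd d, vhat x ≤ Ft := by
    intro x
    rw [hvhat]
    split_ifs with h
    · calc lam⁻¹ * us (lam • x) ≤ lam⁻¹ * Fs := by
            exact mul_le_mul_of_nonneg_left (husle _ h) (inv_pos.2 hlam0).le
        _ = Ft := hlaminv
    · exact le_rfl
  have hvhat_nn : ∀ x : Rd d, 0 ≤ vhat x := by
    intro x
    rw [hvhat]
    split_ifs with h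
    · exact mul_nonneg (inv_pos.2 hlam0).le (husnn _ h)
    · exact hFt.le
  have hcancel : ∀ x : Rd d, lam⁻¹ • (lam • x) = x := fun x => inv_smul_smul₀ hlamne x
  have hcancel' : ∀ x : Rd d, lam • (lam⁻¹ • x) = x := fun x => smul_inv_smul₀ hlamne x
  -- continuity of vhat
  have hvc : Continuous vhat := by
    rw [continuous_iff_continuousAt]
    intro x₀
    set A : Set (Rd d) := (fun x : Rd d => lam • x) ⁻¹' closure U with hA
    have hAc : IsClosed A := isClosed_closure.preimage (continuous_const_smul lam)
    by_cases hxA : x₀ ∈ A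
    · by_cases hxi : x₀ ∈ interior A
      · -- interior case
        have hnb : closure U ∈ 𝓝 (lam • x₀) := by
          have he : IsOpenMap (fun x : Rd d => lam • x) :=
            (Homeomorph.smulOfNeZero lam hlamne).isOpenMap
          have hop : IsOpen ((fun x : Rd d => lam • x) '' interior A) := he _ isOpen_interior
          have hmem : lam • x₀ ∈ (fun x : Rd d => lam • x) '' interior A := ⟨x₀, hxi, rfl⟩
          refine mem_of_superset (hop.mem_nhds hmem) ?_
          rintro y ⟨z, hz, rfl⟩
          exact mem_preimage.1 (interior_subset hz)
        have hus : ContinuousAt us (lam • x₀) := huscont.continuousAt hnb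
        have hca : ContinuousAt (fun x : Rd d => lam⁻¹ * us (lam • x)) x₀ :=
          continuousAt_const.mul (hus.comp ((continuous_const_smul lam).continuousAt))
        apply hca.congr
        filter_upwards [mem_interior_iff_mem_nhds.1 hxi] with y hy
        rw [hvhat]
        rw [if_pos (show lam • y ∈ closure U from mem_preimage.1 hy)]
      · -- frontier of A case
        have hxf : x₀ ∈ frontier A := ⟨subset_closure hxA, hxi⟩
        have hfr' : lam • x₀ ∈ frontier U := by
          apply frontier_closure_subset
          refine ⟨?_, ?_⟩
          · rw [closure_closure]; exact hxA
          · intro hint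
            apply hxi
            have hopen : IsOpen ((fun x : Rd d => lam • x) ⁻¹' interior (closure U)) :=
              isOpen_interior.preimage (continuous_const_smul lam)
            have hsub : (fun x : Rd d => lam • x) ⁻¹' interior (closure U) ⊆ A :=
              fun y hy => show lam • y ∈ closure U from interior_subset (mem_preimage.1 hy)
            exact mem_interior.2 ⟨_, hsub, hopen, hint⟩
        have hv₀ : vhat x₀ = Ft := by
          rw [hvhat, if_pos (show lam • x₀ ∈ closure U from hxA), husbd _ hfr', hlaminv]
        rw [Metric.continuousAt_iff]
        intro ε hε
        refine ⟨ε / (L + 1), by positivity, ?_⟩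
        intro y hy
        rw [hv₀]
        have hdist : vhat y = Ft ∨ |vhat y - Ft| ≤ L * dist y x₀ := by
          rw [hvhat]
          split_ifs with h
          · right
            have h1 := husLip (lam • y) h (lam • x₀) hxA
            have h2 : us (lam • x₀) = Fs := husbd _ hfr'
            have h3 : ‖lam • y - lam • x₀‖ = lam * ‖y - x₀‖ := by
              rw [← smul_sub, norm_smul, Real.norm_eq_abs, abs_of_pos hlam0]
            have h4 : lam⁻¹ * us (lam • y) - Ft = lam⁻¹ * (us (lam • y) - us (lam • x₀)) := by
              rw [h2, mul_sub, hlaminv]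
            rw [h4, abs_mul, abs_of_pos (inv_pos.2 hlam0)]
            calc lam⁻¹ * |us (lam • y) - us (lam • x₀)| ≤ lam⁻¹ * (L * (lam * ‖y - x₀‖)) := by
                  apply mul_le_mul_of_nonneg_left _ (inv_pos.2 hlam0).le
                  rw [← h3]; exact h1
              _ = L * ‖y - x₀‖ := by
                  have h5 : lam⁻¹ * (L * (lam * ‖y - x₀‖)) = (lam⁻¹ * lam) * (L * ‖y - x₀‖) := by
                    ring
                  rw [h5, inv_mul_cancel₀ hlamne, one_mul]
              _ = L * dist y x₀ := by rw [dist_eq_norm]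
          · left; rfl
        rcases hdist with h | h
        · rw [h]; simpa using hε
        · rw [Real.dist_eq]
          calc |vhat y - Ft| ≤ L * dist y x₀ := h
            _ < (L + 1) * (ε / (L + 1)) := by
                apply lt_of_le_of_lt (mul_le_mul_of_nonneg_right (le_add_of_nonneg_right zero_le_one) dist_nonneg)
                exact mul_lt_mul_of_pos_left hy (by positivity)
            _ = ε := by field_simp
    · -- outside A
      have hAo : IsOpen Aᶜ := hAc.isOpen_compl
      have : ContinuousAt (fun _ : Rd d => Ft) x₀ := continuousAt_const
      apply this.congr
      filter_upwards [hAo.mem_nhds hxA] with y hy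
      rw [hvhat, if_neg (show ¬ lam • y ∈ closure U from hy)]
  -- boundary value
  have hbd : ∀ x ∈ frontier U, vhat x = Ft := by
    intro x hx
    rw [hvhat]
    split_ifs with h
    · have hxK : x ∈ K := by
        rw [hUdef, frontier_compl] at hx
        exact hKclosed.frontier_subset hx
      have hlxK : lam • x ∈ K := hKstar.smul_mem hxK hlam0.le hlam1.le
      rw [husbd _ (hclosK _ h hlxK), hlaminv]
    · rfl
  -- vhat dominates us
  have hge : ∀ x ∈ closure U, us x ≤ vhat x := by
    intro x hx
    rw [hvhat]
    split_ifs with h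
    · calc us x ≤ us (lam • x) := husstar lam ⟨hlam0, hlam1⟩ x hx h
        _ = 1 * us (lam • x) := (one_mul _).symm
        _ ≤ lam⁻¹ * us (lam • x) := mul_le_mul_of_nonneg_right hlaminv1 (husnn _ h)
    · exact (husle x hx).trans hFst.le
  -- superharmonicity of vhat
  have hsuper : ViscSuperharmonicOn vhat (PosSet vhat ∩ U) := by
    intro φ x₀ hx₀ hφ hmin
    have hminev : ∀ᶠ y in 𝓝 x₀, vhat x₀ - φ x₀ ≤ vhat y - φ y := hmin
    by_cases hFteq : vhat x₀ = Ft
    · have hmax : IsLocalMax φ x₀ := by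
        filter_upwards [hminev] with y hy
        have := hvhat_leFt y
        rw [hFteq] at hy
        linarith
      exact lap_nonpos_of_isLocalMax hφ hmax
    · have hAx : lam • x₀ ∈ closure U := by
        by_contra h
        exact hFteq (by rw [hvhat, if_neg h])
      have hlt : vhat x₀ < Ft := lt_of_le_of_ne (hvhat_leFt x₀) hFteq
      have hval : vhat x₀ = lam⁻¹ * us (lam • x₀) := by rw [hvhat, if_pos hAx]
      have husval : us (lam • x₀) = lam * vhat x₀ := by
        rw [hval, ← mul_assoc, mul_inv_cancel₀ hlamne, one_mul]
      have hv₀pos : 0 < vhat x₀ := hx₀.1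
      have hpos : 0 < us (lam • x₀) := by rw [husval]; exact mul_pos hlam0 hv₀pos
      have hne : us (lam • x₀) ≠ Fs := by
        rw [husval]
        intro h
        have h2 : lam * Ft = Fs := by rw [hlamdef]; field_simp
        rw [← h2] at h
        exact hFteq (mul_left_cancel₀ hlamne h)
      have hy₀U : lam • x₀ ∈ U := hmemU _ hAx (fun hf => hne (husbd _ hf))
      have hψcd : ContDiffAt ℝ 2 (fun y : Rd d => lam * φ (lam⁻¹ • y)) (lam • x₀) := by
        have hsmul : ContDiff ℝ 2 (fun y : Rd d => lam⁻¹ • y) := contDiff_id.const_smul lam⁻¹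
        have h1 : ContDiffAt ℝ 2 (fun y : Rd d => φ (lam⁻¹ • y)) (lam • x₀) := by
          apply ContDiffAt.comp
          · rw [hcancel]; exact hφ
          · exact hsmul.contDiffAt
        exact contDiffAt_const.mul h1
      have hmin' : IsLocalMin (fun y => us y - (fun y : Rd d => lam * φ (lam⁻¹ • y)) y)
          (lam • x₀) := by
        have hUnb : U ∈ 𝓝 (lam • x₀) := hUopen.mem_nhds hy₀U
        have hpre : Tendsto (fun y : Rd d => lam⁻¹ • y) (𝓝 (lam • x₀)) (𝓝 x₀) := by
          have h1 := (continuous_const_smul (lam⁻¹ : ℝ)).tendsto (lam • x₀)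
          rw [hcancel] at h1
          exact h1
        have hev2 := hpre.eventually hminev
        filter_upwards [hUnb, hev2] with y hyU hy
        have h2 : vhat (lam⁻¹ • y) = lam⁻¹ * us y := by
          rw [hvhat]
          rw [if_pos (show lam • lam⁻¹ • y ∈ closure U by rw [hcancel']; exact hUclos hyU)]
          rw [hcancel']
        have h3 : us y = lam * vhat (lam⁻¹ • y) := by
          rw [h2, ← mul_assoc, mul_inv_cancel₀ hlamne, one_mul]
        have h4 := mul_le_mul_of_nonneg_left hy hlam0.le
        show us (lam • x₀) - lam * φ (lam⁻¹ • (lam • x₀)) ≤ us y - lam * φ (lam⁻¹ • y)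
        rw [h3, husval, hcancel]
        nlinarith [h4]
      have hsol := hussol.1 (fun y : Rd d => lam * φ (lam⁻¹ • y)) (lam • x₀)
        ⟨hpos, hy₀U⟩ hψcd hmin'
      have hφ' : ContDiffAt ℝ 2 φ (lam⁻¹ • (lam • x₀)) := by rw [hcancel]; exact hφ
      have hsc := lap_scale lam lam⁻¹ (inv_ne_zero hlamne) hφ'
      rw [hsc, hcancel] at hsol
      have hcoef : 0 < lam * (lam⁻¹) ^ 2 := by positivity
      nlinarith [hsol, hcoef]
  -- slope bound on the free boundary
  have hslope : ∀ x₀ ∈ frontier (PosSet vhat) ∩ U, ∀ p ∈ Dminus vhat x₀, ‖p‖ ^ 2 ≤ Q := by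
    rintro x₀ ⟨hfr, hxU⟩ p hp
    have hni : x₀ ∉ interior (PosSet vhat) := hfr.2
    -- Step 1 : lam • x₀ ∈ closure U
    have hAx : lam • x₀ ∈ closure U := by
      by_contra hA
      apply hni
      have hAo : IsOpen {x : Rd d | lam • x ∉ closure U} := by
        have : IsOpen ((fun x : Rd d => lam • x) ⁻¹' (closure U)ᶜ) :=
          isClosed_closure.isOpen_compl.preimage (continuous_const_smul lam)
        exact this
      rw [mem_interior_iff_mem_nhds]
      refine mem_of_superset (hAo.mem_nhds hA) ?_
      intro y hy
      show 0 < vhat y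
      rw [hvhat, if_neg hy]
      exact hFt
    -- Step 2 : lam • x₀ ∉ frontier U
    have hnotfr : lam • x₀ ∉ frontier U := by
      intro hf
      apply hni
      have hcw : Tendsto us (𝓝[closure U] (lam • x₀)) (𝓝 Fs) := by
        have h1 := huscont _ (hfrsub hf)
        rwa [ContinuousWithinAt, husbd _ hf] at h1
      have hev : ∀ᶠ y in 𝓝[closure U] (lam • x₀), 0 < us y :=
        hcw.eventually (eventually_gt_nhds hFs)
      rw [eventually_nhdsWithin_iff, Metric.eventually_nhds_iff] at hev
      obtain ⟨r, hr, hball⟩ := hev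
      rw [mem_interior_iff_mem_nhds]
      have hballnb : Metric.ball x₀ (lam⁻¹ * r) ∈ 𝓝 x₀ :=
        Metric.ball_mem_nhds _ (by positivity)
      refine mem_of_superset hballnb ?_
      intro y hy
      show 0 < vhat y
      rw [hvhat]
      split_ifs with h
      · refine mul_pos (inv_pos.2 hlam0) (hball ?_ h)
        rw [dist_eq_norm, ← smul_sub, norm_smul, Real.norm_eq_abs, abs_of_pos hlam0]
        rw [mem_ball, dist_eq_norm] at hy
        calc lam * ‖y - x₀‖ < lam * (lam⁻¹ * r) := mul_lt_mul_of_pos_left hy hlam0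
          _ = r := by field_simp
      · exact hFt
    have hyU : lam • x₀ ∈ U := hmemU _ hAx hnotfr
    -- Step 3 : us (lam • x₀) = 0
    have hPosOpen : IsOpen (PosSet vhat) := isOpen_lt continuous_const hvc
    have hnotpos : x₀ ∉ PosSet vhat := fun h => hni (by rwa [hPosOpen.interior_eq])
    have hv0 : vhat x₀ = 0 := le_antisymm (not_lt.1 hnotpos) (hvhat_nn x₀)
    have hus0 : us (lam • x₀) = 0 := by
      have h1 : vhat x₀ = lam⁻¹ * us (lam • x₀) := by rw [hvhat, if_pos hAx]
      rw [hv0] at h1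
      have h2 := h1.symm
      rcases mul_eq_zero.1 h2 with h | h
      · exact absurd h (inv_ne_zero hlamne)
      · exact h
    -- Step 4 : lam • x₀ ∈ frontier (PosSet us)
    have hfrus : lam • x₀ ∈ frontier (PosSet us) := by
      refine ⟨?_, ?_⟩
      · rw [mem_closure_iff_nhds]
        intro t ht
        have htU : t ∩ U ∈ 𝓝 (lam • x₀) := inter_mem ht (hUopen.mem_nhds hyU)
        have hpre : (fun x : Rd d => lam • x) ⁻¹' (t ∩ U) ∈ 𝓝 x₀ :=
          (continuous_const_smul lam).continuousAt.preimage_mem_nhds htU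
        obtain ⟨x, hxpre, hxpos⟩ := mem_closure_iff_nhds.1 hfr.1 _ hpre
        refine ⟨lam • x, hxpre.1, ?_⟩
        have hc : lam • x ∈ closure U := hUclos hxpre.2
        have h1 : vhat x = lam⁻¹ * us (lam • x) := by rw [hvhat, if_pos hc]
        have h2 : 0 < lam⁻¹ * us (lam • x) := h1 ▸ hxpos
        show 0 < us (lam • x)
        by_contra hneg
        push_neg at hneg
        have : lam⁻¹ * us (lam • x) ≤ 0 :=
          mul_nonpos_of_nonneg_of_nonpos (inv_pos.2 hlam0).le hneg
        linarith
      · intro h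
        have h1 : lam • x₀ ∈ PosSet us := interior_subset h
        have h2 : 0 < us (lam • x₀) := h1
        rw [hus0] at h2
        exact lt_irrefl 0 h2
    -- Step 5 : p ∈ Dminus us (lam • x₀)
    have hpmem : p ∈ Dminus us (lam • x₀) := by
      intro ε hε
      obtain ⟨δ, hδ, hpd⟩ := hp ε hε
      obtain ⟨r, hr, hball⟩ := Metric.isOpen_iff.1 hUopen _ hyU
      refine ⟨min (lam * δ) r, lt_min (by positivity) hr, ?_⟩
      intro y hy
      have hyU' : y ∈ U := hball (by
        rw [mem_ball, dist_eq_norm]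
        exact lt_of_lt_of_le hy (min_le_right _ _))
      have hcond : lam • (lam⁻¹ • y) ∈ closure U := by
        rw [hcancel']; exact hUclos hyU'
      have hsubeq : lam⁻¹ • y - x₀ = lam⁻¹ • (y - lam • x₀) := by
        rw [smul_sub, hcancel]
      have hnorm : ‖lam⁻¹ • y - x₀‖ = lam⁻¹ * ‖y - lam • x₀‖ := by
        rw [hsubeq, norm_smul, Real.norm_eq_abs, abs_of_pos (inv_pos.2 hlam0)]
      have hlt : ‖lam⁻¹ • y - x₀‖ < δ := by
        rw [hnorm]
        have h1 : ‖y - lam • x₀‖ < lam * δ := lt_of_lt_of_le hy (min_le_left _ _)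
        calc lam⁻¹ * ‖y - lam • x₀‖ < lam⁻¹ * (lam * δ) :=
              mul_lt_mul_of_pos_left h1 (inv_pos.2 hlam0)
          _ = δ := by field_simp
      have h1 := hpd (lam⁻¹ • y) hlt
      have hvx : vhat (lam⁻¹ • y) = lam⁻¹ * us y := by
        rw [hvhat, if_pos hcond, hcancel']
      have hinn : ⟪p, lam⁻¹ • y - x₀⟫ = lam⁻¹ * ⟪p, y - lam • x₀⟫ := by
        rw [hsubeq, real_inner_smul_right]
      rw [hvx, hinn, hnorm] at h1
      have h3 := mul_le_mul_of_nonneg_left h1 hlam0.le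
      have hll : lam * lam⁻¹ = 1 := mul_inv_cancel₀ hlamne
      calc ⟪p, y - lam • x₀⟫ - ε * ‖y - lam • x₀‖
          = lam * (lam⁻¹ * ⟪p, y - lam • x₀⟫ - ε * (lam⁻¹ * ‖y - lam • x₀‖)) := by
            rw [mul_sub, ← mul_assoc, hll, one_mul]
            rw [show lam * (ε * (lam⁻¹ * ‖y - lam • x₀‖)) = (lam * lam⁻¹) * (ε * ‖y - lam • x₀‖) by ring]
            rw [hll, one_mul]
        _ ≤ lam * (lam⁻¹ * us y) := h3
        _ = us y := by rw [← mul_assoc, hll, one_mul]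
    exact hussol.2 (lam • x₀) ⟨hfrus, hyU⟩ p hpmem
  -- vhat belongs to St
  have hvhatSt : vhat ∈ St := by
    rw [hSt]
    exact ⟨hvc.continuousOn, fun x _ => hvhat_nn x, hbd, hge, hsuper, hslope⟩
  -- pointwise upper bound for vhat
  have hkey : (1 - lam) * (R / lam) = R * (Ft - Fs) / Fs := by
    rw [hlamdef]; field_simp
  have hvhat_ub : ∀ x ∈ closure U, vhat x ≤ us x + (1 + L * R / Fs) * (Ft - Fs) := by
    intro x hx
    have hCpos : 0 < (1 + L * R / Fs) * (Ft - Fs) := by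
      have h1 : (0:ℝ) < 1 + L * R / Fs := by positivity
      have h2 : 0 < Ft - Fs := by linarith
      exact mul_pos h1 h2
    rw [hvhat]
    split_ifs with h
    · -- lam • x ∈ closure U
      rcases (husnn _ h).eq_or_lt with h0 | h0
      · rw [← h0, mul_zero]
        have := husnn x hx
        linarith
      · -- 0 < us (lam • x)
        have hmemB : lam • x ∈ Metric.closedBall (0 : Rd d) R := hussupp h0
        have hnx : lam * ‖x‖ ≤ R := by
          rw [mem_closedBall, dist_zero_right, norm_smul, Real.norm_eq_abs,
            abs_of_pos hlam0] at hmemB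
          exact hmemB
        have hxle : ‖x‖ ≤ R / lam := (le_div_iff₀ hlam0).2 (by rwa [mul_comm])
        have hlip := husLip (lam • x) h x hx
        have hsn : ‖lam • x - x‖ = (1 - lam) * ‖x‖ := by
          have h1 : lam • x - x = (lam - 1) • x := by
            rw [sub_smul, one_smul]
          rw [h1, norm_smul, Real.norm_eq_abs, abs_of_neg (by linarith), neg_sub]
        have hA1 : us (lam • x) - us x ≤ L * ((1 - lam) * ‖x‖) := by
          rw [← hsn]
          exact (abs_le.1 hlip).2
        have hA2 : (1 - lam) * ‖x‖ ≤ R * (Ft - Fs) / Fs := by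
          rw [← hkey]
          exact mul_le_mul_of_nonneg_left hxle (by linarith)
        have hA3 : L * ((1 - lam) * ‖x‖) ≤ L * (R * (Ft - Fs) / Fs) :=
          mul_le_mul_of_nonneg_left hA2 hL
        have h6 : lam⁻¹ * us (lam • x) ≤ us (lam • x) + (Ft - Fs) := by
          have h7 : (lam⁻¹ - 1) * us (lam • x) ≤ (lam⁻¹ - 1) * Fs :=
            mul_le_mul_of_nonneg_left (husle _ h) (by linarith)
          have h8 : (lam⁻¹ - 1) * Fs = Ft - Fs := by
            rw [sub_mul, hlaminv, one_mul]
          nlinarith [h7, h8]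
        have h9 : L * (R * (Ft - Fs) / Fs) = (L * R / Fs) * (Ft - Fs) := by
          ring
        nlinarith [h6, hA1, hA3, h9]
    · -- lam • x ∉ closure U : frontier crossing
      have hxK' : lam • x ∈ K := by
        by_contra hk
        exact h (hUclos (by rw [hUdef]; exact hk))
      set T : Set ℝ := Icc lam 1 ∩ (fun μ : ℝ => μ • x) ⁻¹' K with hT
      have hTmem : lam ∈ T := ⟨⟨le_rfl, hlam1.le⟩, hxK'⟩
      have hTc : IsClosed T :=
        isClosed_Icc.inter (hKclosed.preimage (continuous_id.smul continuous_const))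
      have hbdd : BddAbove T := ⟨1, fun μ hμ => hμ.1.2⟩
      set μs : ℝ := sSup T with hμs
      have hμT : μs ∈ T := hTc.csSup_mem ⟨lam, hTmem⟩ hbdd
      have hμlam : lam ≤ μs := le_csSup hbdd hTmem
      have hμ1 : μs ≤ 1 := hμT.1.2
      have hzK : μs • x ∈ K := hμT.2
      have hzclos : μs • x ∈ closure U := by
        rcases hμ1.eq_or_lt with heq | hlt1
        · rw [heq, one_smul]; exact hx
        · set f : ℕ → ℝ := fun n => μs + (1 - μs) / (n + 2) with hf
          have htf : Tendsto f atTop (𝓝 μs) := by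
            have h1 : Tendsto (fun n : ℕ => ((n : ℝ) + 2)) atTop atTop :=
              tendsto_atTop_add_const_right _ 2 tendsto_natCast_atTop_atTop
            have h2 : Tendsto (fun n : ℕ => (1 - μs) / ((n : ℝ) + 2)) atTop (𝓝 0) :=
              Tendsto.div_atTop tendsto_const_nhds h1
            have h3 := tendsto_const_nhds (x := μs) (f := atTop (α := ℕ)) |>.add h2
            simpa using h3
          have htend : Tendsto (fun n : ℕ => f n • x) atTop (𝓝 (μs • x)) :=
            htf.smul_const x
          apply mem_closure_of_tendsto htend
          apply Filter.Eventually.of_forall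
          intro n
          have hpos2 : (0:ℝ) < (n : ℝ) + 2 := by positivity
          have hgt : μs < f n := by
            have : 0 < (1 - μs) / ((n : ℝ) + 2) := div_pos (by linarith) hpos2
            simp only [hf]; linarith
          have hle1 : f n ≤ 1 := by
            have h1 : (1 - μs) / ((n : ℝ) + 2) ≤ (1 - μs) := by
              apply div_le_self (by linarith)
              linarith
            simp only [hf]; linarith
          have hnK : f n • x ∉ K := by
            intro hmem
            have : f n ∈ T := ⟨⟨hμlam.trans hgt.le, hle1⟩, hmem⟩
            have := le_csSup hbdd this
            linarith
          rw [hUdef]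
          exact hnK
      have hzfr : μs • x ∈ frontier U := hclosK _ hzclos hzK
      have husz : us (μs • x) = Fs := husbd _ hzfr
      have hμ0 : 0 < μs := hlam0.trans_le hμlam
      have hzn : μs * ‖x‖ ≤ R := by
        have := hKR hzK
        rwa [mem_closedBall, dist_zero_right, norm_smul, Real.norm_eq_abs,
          abs_of_pos hμ0] at this
      have hxle : ‖x‖ ≤ R / lam := by
        rw [le_div_iff₀ hlam0, mul_comm]
        calc lam * ‖x‖ ≤ μs * ‖x‖ := mul_le_mul_of_nonneg_right hμlam (norm_nonneg x)
          _ ≤ R := hzn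
      have hlip := husLip x hx (μs • x) hzclos
      have hsn : ‖x - μs • x‖ = (1 - μs) * ‖x‖ := by
        have h1 : x - μs • x = (1 - μs) • x := by rw [sub_smul, one_smul]
        rw [h1, norm_smul, Real.norm_eq_abs, abs_of_nonneg (by linarith)]
      have hB1 : Fs - us x ≤ L * ((1 - μs) * ‖x‖) := by
        rw [← hsn, ← husz]
        have := (abs_le.1 hlip).1
        linarith
      have hB2 : (1 - μs) * ‖x‖ ≤ (1 - lam) * ‖x‖ :=
        mul_le_mul_of_nonneg_right (by linarith) (norm_nonneg x)
      have hB3 : (1 - lam) * ‖x‖ ≤ R * (Ft - Fs) / Fs := by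
        rw [← hkey]
        exact mul_le_mul_of_nonneg_left hxle (by linarith)
      have hB4 : L * ((1 - μs) * ‖x‖) ≤ L * (R * (Ft - Fs) / Fs) :=
        mul_le_mul_of_nonneg_left (hB2.trans hB3) hL
      have h9 : L * (R * (Ft - Fs) / Fs) = (L * R / Fs) * (Ft - Fs) := by ring
      nlinarith [hB1, hB4, h9]
  -- conclusion
  refine ⟨hvhatSt, ?_⟩
  intro x hx
  have hlb : ∀ a ∈ (fun v : Rd d → ℝ => v x) '' St, us x ≤ a := by
    rintro a ⟨v, hv, rfl⟩
    rw [hSt] at hv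
    exact hv.2.2.2.1 x hx
  have hne2 : ((fun v : Rd d → ℝ => v x) '' St).Nonempty := ⟨vhat x, vhat, hvhatSt, rfl⟩
  constructor
  · rw [hw]
    exact le_csInf hne2 hlb
  · rw [hw]
    have h1 : sInf ((fun v : Rd d → ℝ => v x) '' St) ≤ vhat x :=
      csInf_le ⟨us x, hlb⟩ ⟨vhat, hvhatSt, rfl⟩
    exact h1.trans (hvhat_ub x hx)
end
end

section
/- Let d ≥ 1, β ∈ (0,1], L ≥ 0, M ≥ 0, and let u : ℝ × ℝ^d → ℝ satisfy: (i) |u(t,x) − u(s,x)| ≤ L|t−s| for all s, t ∈ ℝ and x ∈ ℝ^d; (ii) for every t ∈ ℝ, the map x ↦ u(t,x) is differentiable on ℝ^d and its gradient is β-Hölder continuous with constant M, i.e. |∇u(t,x) − ∇u(t,y)| ≤ M|x−y|^β for all x, y. Then for all s, t ∈ ℝ and x ∈ ℝ^d, |∇u(t,x) − ∇u(s,x)| ≤ 2(L + M)|t−s|^{β/(1+β)}. -/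
open Set Metric Filter
open scoped RealInnerProductSpace Topology Pointwise

noncomputable section

/-- Taylor-type bound: a β-Hölder gradient controls the first-order remainder. -/
lemma taylor_remainder_bound {d : ℕ} {β M : ℝ} (hβ : 0 < β) (hM : 0 ≤ M)
    (f : Rd d → ℝ) (hdiff : ∀ y : Rd d, DifferentiableAt ℝ f y)
    (hH : ∀ x y : Rd d, ‖gradient f x - gradient f y‖ ≤ M * ‖x - y‖ ^ β)
    (x v : Rd d) :
    |f (x + v) - f x - ⟪gradient f x, v⟫| ≤ M * ‖v‖ ^ β * ‖v‖ := by
  have hseg : Convex ℝ (segment ℝ x (x + v)) := convex_segment _ _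
  have bound : ∀ z ∈ segment ℝ x (x + v),
      ‖fderiv ℝ f z - fderiv ℝ f x‖ ≤ M * ‖v‖ ^ β := by
    intro z hz
    have hzx : ‖z - x‖ ≤ ‖v‖ := by
      rw [segment_eq_image'] at hz
      obtain ⟨θ, hθ, rfl⟩ := hz
      have h0 : x + θ • (x + v - x) - x = θ • v := by
        rw [add_sub_cancel_left, add_sub_cancel_left]
      rw [h0, norm_smul]
      calc ‖θ‖ * ‖v‖ ≤ 1 * ‖v‖ := by
            apply mul_le_mul_of_nonneg_right _ (norm_nonneg v)
            rw [Real.norm_eq_abs, abs_le]; constructor <;> linarith [hθ.1, hθ.2]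
        _ = ‖v‖ := one_mul _
    have hiso : fderiv ℝ f z - fderiv ℝ f x
        = InnerProductSpace.toDual ℝ (Rd d) (gradient f z - gradient f x) := by
      simp [gradient]
    rw [hiso]
    calc ‖InnerProductSpace.toDual ℝ (Rd d) (gradient f z - gradient f x)‖
        = ‖gradient f z - gradient f x‖ :=
          (InnerProductSpace.toDual ℝ (Rd d)).norm_map _
      _ ≤ M * ‖z - x‖ ^ β := hH z x
      _ ≤ M * ‖v‖ ^ β :=
          mul_le_mul_of_nonneg_left
            (Real.rpow_le_rpow (norm_nonneg _) hzx hβ.le) hM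
  have key := hseg.norm_image_sub_le_of_norm_fderiv_le'
    (fun y _ => hdiff y) bound (left_mem_segment ℝ x (x + v))
    (right_mem_segment ℝ x (x + v))
  rw [add_sub_cancel_left] at key
  have hgrad : (fderiv ℝ f x) v = ⟪gradient f x, v⟫ := by simp [gradient]
  rw [hgrad] at key
  simpa [Real.norm_eq_abs] using key

/-- interpolation — Lipschitz in time plus a uniformly β-Hölder spatial
gradient gives a β/(1+β)-Hölder-in-time spatial gradient. -/
theorem gradient_holder_in_time
    {d : ℕ} (hd : 1 ≤ d) (β L M : ℝ) (hβ : β ∈ Set.Ioc (0:ℝ) 1)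
    (hL : 0 ≤ L) (hM : 0 ≤ M)
    (u : ℝ → Rd d → ℝ)
    (hLip : ∀ s t : ℝ, ∀ x : Rd d, |u t x - u s x| ≤ L * |t - s|)
    (hdiff : ∀ t : ℝ, ∀ x : Rd d, DifferentiableAt ℝ (u t) x)
    (hHolder : ∀ t : ℝ, ∀ x y : Rd d,
      ‖gradient (u t) x - gradient (u t) y‖ ≤ M * ‖x - y‖ ^ β) :
    ∀ s t : ℝ, ∀ x : Rd d,
      ‖gradient (u t) x - gradient (u s) x‖ ≤
        2 * (L + M) * |t - s| ^ (β / (1 + β)) := by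
  intro s t x
  have hβ0 : 0 < β := hβ.1
  have h1β : 0 < 1 + β := by linarith
  have h1βne : (1 + β) ≠ 0 := ne_of_gt h1β
  set A : ℝ := |t - s| with hAdef
  rcases eq_or_lt_of_le (abs_nonneg (t - s)) with hA | hA
  · have hts : t = s := by
      have := abs_eq_zero.mp hA.symm
      linarith [sub_eq_zero.mp this]
    subst hts
    simp only [sub_self, norm_zero]
    positivity
  · set g : Rd d := gradient (u t) x - gradient (u s) x with hgdef
    by_cases hg : g = 0
    · rw [hg, norm_zero]; positivity
    have hgn : 0 < ‖g‖ := norm_pos_iff.mpr hg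
    set r : ℝ := A ^ (1 / (1 + β)) with hrdef
    have hr : 0 < r := Real.rpow_pos_of_pos hA _
    set v : Rd d := (r / ‖g‖) • g with hvdef
    have hv : ‖v‖ = r := by
      rw [hvdef, norm_smul, Real.norm_eq_abs,
        abs_of_pos (div_pos hr hgn), div_mul_cancel₀]
      exact ne_of_gt hgn
    have hinner : ⟪g, v⟫ = r * ‖g‖ := by
      rw [hvdef, real_inner_smul_right, real_inner_self_eq_norm_sq]
      field_simp
    have hrβ : r ^ β = A ^ (β / (1 + β)) := by
      rw [hrdef, ← Real.rpow_mul hA.le]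
      congr 1
      field_simp
    have hrA : r ^ β * r = A := by
      rw [hrβ, hrdef, ← Real.rpow_add hA,
        show β / (1 + β) + 1 / (1 + β) = 1 by field_simp; ring, Real.rpow_one]
    have hAr : A ^ (β / (1 + β)) = A / r := by
      rw [hrdef, show β / (1 + β) = 1 - 1 / (1 + β) by field_simp; ring,
        Real.rpow_sub hA, Real.rpow_one]
    have expand : ⟪g, v⟫ = ((u t (x + v) - u s (x + v)) - (u t x - u s x))
        - (u t (x + v) - u t x - ⟪gradient (u t) x, v⟫)
        + (u s (x + v) - u s x - ⟪gradient (u s) x, v⟫) := by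
      rw [hgdef, inner_sub_left]; ring
    have ht := taylor_remainder_bound hβ0 hM (u t) (hdiff t) (hHolder t) x v
    have hs2 := taylor_remainder_bound hβ0 hM (u s) (hdiff s) (hHolder s) x v
    rw [hv] at ht hs2
    have key : r * ‖g‖ ≤ 2 * L * A + 2 * (M * (r ^ β * r)) := by
      rw [← hinner, expand]
      obtain ⟨a1, a2⟩ := abs_le.mp (hLip s t (x + v))
      obtain ⟨b1, b2⟩ := abs_le.mp (hLip s t x)
      obtain ⟨c1, c2⟩ := abs_le.mp ht
      obtain ⟨e1, e2⟩ := abs_le.mp hs2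
      linarith
    have key2 : r * ‖g‖ ≤ 2 * (L + M) * A := by
      rw [hrA] at key; nlinarith
    calc ‖g‖ ≤ 2 * (L + M) * A / r := (le_div_iff₀ hr).mpr (by nlinarith)
      _ = 2 * (L + M) * A ^ (β / (1 + β)) := by rw [hAr, mul_div_assoc]
end
end

section
/- Let U ⊆ ℝ^d be open, let u : U → [0,∞) be continuous and superharmonic in the viscosity sense on {u>0} ∩ U, let G be a relatively open subset of ∂{u>0} ∩ U, and let Q > 0. Then the following are equivalent: (a) for every x ∈ G and every p ∈ D₋u(x), |p|² ≤ Q; (b) for every C² function φ and every x ∈ G such that φ ≤ u on a neighborhood of x intersected with U, u(x) = φ(x) = 0, and Δφ(x) > 0, one has |∇φ(x)|² ≤ Q. -/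
open Set Metric Filter
open scoped RealInnerProductSpace Topology Pointwise

noncomputable section

namespace Barrier

variable {d : ℕ} (z : Rd d) (μ c : ℝ)

/-- the radial exponential barrier -/
def bar (y : Rd d) : ℝ := c * Real.exp (-μ * ‖y - z‖^2)

lemma hasFDerivAt_bar (y : Rd d) :
    HasFDerivAt (bar z μ c)
      ((-2 * c * μ * Real.exp (-μ * ‖y - z‖^2)) • innerSL ℝ (y - z)) y := by
  have h1 : HasFDerivAt (fun y : Rd d => ‖y - z‖^2)
      (2 • (innerSL ℝ (y - z)).comp (ContinuousLinearMap.id ℝ (Rd d))) y := by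
    simpa using ((hasFDerivAt_id y).sub_const z).norm_sq
  have h2 : HasFDerivAt (fun y : Rd d => -μ * ‖y - z‖^2)
      ((-μ) • (2 • (innerSL ℝ (y - z)).comp (ContinuousLinearMap.id ℝ (Rd d)))) y :=
    h1.const_mul (-μ)
  have h3 := (Real.hasDerivAt_exp (-μ * ‖y - z‖^2)).comp_hasFDerivAt y h2
  have h4 := h3.const_mul c
  refine h4.congr_fderiv ?_
  ext v
  simp [ContinuousLinearMap.smul_apply, two_smul]
  ring

lemma contDiff_bar : ContDiff ℝ 2 (bar z μ c) := by
  unfold bar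
  exact contDiff_const.mul (Real.contDiff_exp.comp
    (contDiff_const.mul ((contDiff_id.sub contDiff_const).norm_sq ℝ)))

lemma fderiv_bar_apply (y v : Rd d) :
    fderiv ℝ (bar z μ c) y v = (-2 * c * μ * Real.exp (-μ * ‖y - z‖^2)) * ⟪y - z, v⟫ := by
  rw [(hasFDerivAt_bar z μ c y).fderiv]
  simp [sub_mul, Finset.sum_sub_distrib, inner_sub_left]

lemma sum_sq_eq_norm_sq (w : Rd d) : ∑ i : Fin d, (w i)^2 = ‖w‖^2 := by
  rw [← real_inner_self_eq_norm_sq]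
  rw [PiLp.inner_apply]
  simp [sq]

lemma hasFDerivAt_inner_sub (v y : Rd d) :
    HasFDerivAt (fun y : Rd d => ⟪y - z, v⟫) (innerSL ℝ v) y := by
  have : (fun y : Rd d => ⟪y - z, v⟫) = fun y : Rd d => (innerSL ℝ v) (y - z) := by
    funext y; rw [innerSL_apply_apply]; exact real_inner_comm _ _
  rw [this]
  exact ((innerSL ℝ v).hasFDerivAt (x := y - z)).comp y ((hasFDerivAt_id y).sub_const z)

lemma lap_bar (x : Rd d) :
    lap (bar z μ c) x
      = Real.exp (-μ * ‖x - z‖^2) * (4*c*μ^2*‖x - z‖^2 - 2*c*μ*d) := by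
  have key : ∀ i : Fin d,
      fderiv ℝ (fun y => fderiv ℝ (bar z μ c) y (EuclideanSpace.single i (1:ℝ))) x
        (EuclideanSpace.single i (1:ℝ))
      = (-2*c*μ * Real.exp (-μ * ‖x - z‖^2)) * 1
        + ⟪x - z, EuclideanSpace.single i (1:ℝ)⟫ *
          (4*c*μ^2 * Real.exp (-μ * ‖x - z‖^2) * ⟪x - z, EuclideanSpace.single i (1:ℝ)⟫) := by
    intro i
    set v := EuclideanSpace.single i (1:ℝ) with hv
    have hfe : (fun y => fderiv ℝ (bar z μ c) y v)
        = fun y => bar z μ (-2*c*μ) y * ⟪y - z, v⟫ := by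
      funext y; rw [fderiv_bar_apply]; unfold bar; ring
    have hprod := (hasFDerivAt_bar z μ (-2*c*μ) x).mul (hasFDerivAt_inner_sub z v x)
    rw [hfe]
    rw [HasFDerivAt.fderiv (f := fun y => bar z μ (-2*c*μ) y * ⟪y - z, v⟫) hprod]
    have hvv : (⟪v, v⟫ : ℝ) = 1 := by
      simp [hv, EuclideanSpace.inner_single_left, EuclideanSpace.single_apply]
    simp only [ContinuousLinearMap.add_apply, ContinuousLinearMap.smul_apply,
      ContinuousLinearMap.smul_apply, innerSL_apply_apply, smul_eq_mul]
    rw [hvv]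
    unfold bar
    ring
  unfold lap
  rw [Finset.sum_congr rfl (fun i _ => key i)]
  have hsum : ∑ i : Fin d, (⟪x - z, EuclideanSpace.single i (1:ℝ)⟫ : ℝ) ^ 2 = ‖x - z‖^2 := by
    have : ∀ i : Fin d, (⟪x - z, EuclideanSpace.single i (1:ℝ)⟫ : ℝ) = (x - z) i := by
      intro i; rw [EuclideanSpace.inner_single_right]; simp
    rw [Finset.sum_congr rfl (fun i _ => by rw [this i])]
    exact sum_sq_eq_norm_sq (x - z)
  rw [Finset.sum_add_distrib, Finset.sum_const, Finset.card_univ, Fintype.card_fin]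
  have h2 : ∑ i : Fin d, (⟪x - z, EuclideanSpace.single i (1:ℝ)⟫ : ℝ) *
      (4*c*μ^2 * Real.exp (-μ * ‖x - z‖^2) * (⟪x - z, EuclideanSpace.single i (1:ℝ)⟫ : ℝ))
      = 4*c*μ^2 * Real.exp (-μ * ‖x - z‖^2) *
        ∑ i : Fin d, (⟪x - z, EuclideanSpace.single i (1:ℝ)⟫ : ℝ)^2 := by
    rw [Finset.mul_sum]
    exact Finset.sum_congr rfl fun i _ => by ring
  rw [h2, hsum]
  ring

lemma gradient_bar (x : Rd d) :
    gradient (bar z μ c) x = (-2*c*μ * Real.exp (-μ * ‖x - z‖^2)) • (x - z) := by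
  have h : HasGradientAt (bar z μ c) ((-2*c*μ * Real.exp (-μ * ‖x - z‖^2)) • (x - z)) x := by
    rw [hasGradientAt_iff_hasFDerivAt]
    refine (hasFDerivAt_bar z μ c x).congr_fderiv ?_
    ext v
    simp [InnerProductSpace.toDual_apply_apply, inner_smul_left, real_inner_smul_left]
  exact h.gradient

lemma norm_gradient_bar (x : Rd d) (hc : 0 ≤ c) (hμ : 0 ≤ μ) :
    ‖gradient (bar z μ c) x‖ = 2*c*μ * Real.exp (-μ * ‖x - z‖^2) * ‖x - z‖ := by
  rw [gradient_bar, norm_smul]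
  rw [Real.norm_eq_abs, show -2*c*μ * Real.exp (-μ * ‖x - z‖^2)
      = -(2*c*μ * Real.exp (-μ * ‖x - z‖^2)) by ring, abs_neg,
    abs_of_nonneg (by positivity)]

end Barrier

lemma exp_sub_one_le_mul {w K : ℝ} (hw : 0 ≤ w) (hK : Real.exp w ≤ K) :
    Real.exp w - 1 ≤ w * K := by
  have h1 : Real.exp w - 1 ≤ w * Real.exp w := by
    nlinarith [Real.add_one_le_exp (-w), Real.exp_neg w, Real.exp_pos w,
      inv_mul_cancel₀ (Real.exp_ne_zero w)]
  have h2 : w * Real.exp w ≤ w * K := mul_le_mul_of_nonneg_left hK hw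
  linarith

lemma lap_aux {c μ ρ dd : ℝ} (hc : 0 < c) (hμ : 0 < μ) (hdd : 1 ≤ dd)
    (h : (9:ℝ)/8 * dd ≤ μ * ρ^2) :
    0 < Real.exp (-μ * ρ^2) * (4*c*μ^2*ρ^2 - 2*c*μ*dd) := by
  apply mul_pos (Real.exp_pos _)
  have h1 : 0 ≤ 4*c*μ := by positivity
  have h2 := mul_le_mul_of_nonneg_left h h1
  have h3 : 0 < c*μ*dd := by positivity
  nlinarith [h2, h3]

lemma grad_aux {c μ ρ R : ℝ} (hc : 0 < c) (hμ : 0 < μ) (hρR : ρ ≤ R)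
    (hρ : 0 < ρ) (h98 : (9:ℝ)/8 ≤ μ * ρ^2) :
    2*c*μ*R*Real.exp (-μ * R^2) ≤ 2*c*μ*Real.exp (-μ * ρ^2)*ρ := by
  have h1 : 1 + μ*(R^2-ρ^2) ≤ Real.exp (μ*(R^2-ρ^2)) := by
    have := Real.add_one_le_exp (μ*(R^2-ρ^2)); linarith
  have hA : 0 ≤ R - ρ := sub_nonneg.2 hρR
  have hB : 0 ≤ μ*ρ*(R+ρ) - 1 := by
    have h5 : 0 ≤ μ*ρ*(R-ρ) := mul_nonneg (mul_nonneg hμ.le hρ.le) hA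
    nlinarith [h98, h5]
  have h2 : R ≤ ρ * (1 + μ*(R^2-ρ^2)) := by nlinarith [mul_nonneg hA hB]
  have h3 : Real.exp (-μ * ρ^2) = Real.exp (μ*(R^2-ρ^2)) * Real.exp (-μ*R^2) := by
    rw [← Real.exp_add]; ring_nf
  have h4 : R ≤ ρ * Real.exp (μ*(R^2-ρ^2)) :=
    h2.trans (mul_le_mul_of_nonneg_left h1 hρ.le)
  calc 2*c*μ*R*Real.exp (-μ*R^2)
      ≤ 2*c*μ*(ρ * Real.exp (μ*(R^2-ρ^2)))*Real.exp (-μ*R^2) := by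
        apply mul_le_mul_of_nonneg_right _ (Real.exp_pos _).le
        exact mul_le_mul_of_nonneg_left h4 (by positivity)
    _ = 2*c*μ*Real.exp (-μ*ρ^2)*ρ := by rw [h3]; ring

lemma exp_le_exp_norm_le {μ ρ R : ℝ} (hμ : 0 < μ) (hρ : 0 ≤ ρ) (hR : 0 ≤ R)
    (h : Real.exp (-μ * R^2) < Real.exp (-μ * ρ^2)) : ρ ≤ R := by
  have h3 := Real.exp_lt_exp.mp h
  have h4 : ρ^2 < R^2 := by nlinarith
  nlinarith

lemma exp_scale_lt {μ ρ θ : ℝ} (hμ : 0 < μ) (hρ : 0 < ρ) (hθ : 0 < θ) (hθ1 : θ ≤ 1/2) :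
    Real.exp (-μ * ρ^2) < Real.exp (-μ * ((1-θ)*ρ)^2) := by
  apply Real.exp_lt_exp.2
  nlinarith [mul_pos (mul_pos hμ (mul_pos hρ hρ)) (mul_pos hθ (by linarith : (0:ℝ) < 2 - θ))]

lemma lap_add_const {d : ℕ} (f : Rd d → ℝ) (b : ℝ) (x : Rd d) :
    lap (fun y => f y + b) x = lap f x := by
  have h : ∀ v : Rd d, (fun y => fderiv ℝ (fun y' => f y' + b) y v)
      = fun y => fderiv ℝ f y v := fun v => funext fun y => by rw [fderiv_add_const]
  unfold lap
  exact Finset.sum_congr rfl fun i _ => by rw [h]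

lemma gradient_add_const {d : ℕ} (f : Rd d → ℝ) (b : ℝ) (x : Rd d) :
    gradient (fun y => f y + b) x = gradient f x := by
  unfold gradient
  rw [fderiv_add_const]

set_option maxHeartbeats 2000000 in
/-- equivalence of the subdifferential and smooth-test-function formulations
of the viscosity supersolution condition `|∇u|² ≤ Q` on a relatively open subset `G` of the
free boundary. -/
theorem supersolution_notions_equivalent
    {d : ℕ} (U : Set (Rd d)) (hUopen : IsOpen U) (Q : ℝ) (hQ : 0 < Q)
    (u : Rd d → ℝ) (hucont : ContinuousOn u U) (hunn : ∀ x ∈ U, 0 ≤ u x)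
    (husuper : ViscSuperharmonicOn u (PosSet u ∩ U))
    (G : Set (Rd d))
    (hG : ∃ V : Set (Rd d), IsOpen V ∧ G = V ∩ (frontier (PosSet u) ∩ U)) :
    (∀ x ∈ G, ∀ p ∈ Dminus u x, ‖p‖ ^ 2 ≤ Q) ↔
    (∀ φ : Rd d → ℝ, ContDiff ℝ 2 φ → ∀ x ∈ G,
      (∀ᶠ y in nhdsWithin x U, φ y ≤ u y) → u x = 0 → φ x = 0 →
      0 < lap φ x → ‖gradient φ x‖ ^ 2 ≤ Q) := by
  obtain ⟨V, hVopen, rfl⟩ := hG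
  constructor
  · -- subdifferential bound implies test function bound
    intro ha φ hφ x hx hnear hux hφx _hlap
    have hxU : x ∈ U := hx.2.2
    have hU : U ∈ 𝓝 x := hUopen.mem_nhds hxU
    apply ha x hx
    intro ε hε
    have hdiff : HasFDerivAt φ (fderiv ℝ φ x) x :=
      ((hφ.differentiable (by norm_num)) x).hasFDerivAt
    have h1 := hdiff.isLittleO.def hε
    have h2 : ∀ᶠ y in 𝓝 x, φ y ≤ u y := by
      rwa [nhdsWithin_eq_nhds.2 hU] at hnear
    obtain ⟨δ, hδ, hδball⟩ := Metric.eventually_nhds_iff.mp (h1.and h2)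
    refine ⟨δ, hδ, fun y hy => ?_⟩
    obtain ⟨hA, hB⟩ := hδball (show dist y x < δ by rwa [dist_eq_norm])
    have hinner : (⟪gradient φ x, y - x⟫ : ℝ) = fderiv ℝ φ x (y - x) := by
      simp [gradient, InnerProductSpace.toDual_symm_apply]
    rw [hinner]
    have habs := abs_le.mp (by rwa [Real.norm_eq_abs] at hA)
    linarith [habs.1, hB]
  · -- test function bound implies subdifferential bound
    intro H x₀ hx₀ p hp
    obtain ⟨hx₀V, hx₀F, hx₀U⟩ := hx₀
    have hfrontier_mem : ∀ w : Rd d, w ∈ frontier (PosSet u) →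
        w ∈ closure (PosSet u) ∧ w ∉ interior (PosSet u) := fun w hw => hw
    have hu₀ : u x₀ = 0 := by
      rcases (hunn x₀ hx₀U).lt_or_eq with h | h
      · exfalso
        have hc : ContinuousAt u x₀ := hucont.continuousAt (hUopen.mem_nhds hx₀U)
        have hmem : PosSet u ∈ 𝓝 x₀ := hc.preimage_mem_nhds (isOpen_Ioi.mem_nhds h)
        exact (hfrontier_mem x₀ hx₀F).2 (mem_interior_iff_mem_nhds.2 hmem)
      · exact h.symm
    by_cases hp0 : p = 0
    · simpa [hp0] using hQ.le
    have hβ : 0 < ‖p‖ := norm_pos_iff.mpr hp0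
    set β := ‖p‖ with hβdef
    have hd : 0 < d := by
      rcases Nat.eq_zero_or_pos d with h | h
      · exfalso; apply hp0; subst h
        exact PiLp.ext fun i => i.elim0
      · exact h
    have hdR : (1:ℝ) ≤ (d:ℝ) := by exact_mod_cast hd
    -- reduce to bounding (κ β)² for every κ < 1
    suffices hκQ : ∀ κ : ℝ, 0 < κ → κ < 1 → (κ * β)^2 ≤ Q by
      by_contra hQβ
      push_neg at hQβ
      have hβ2 : (0:ℝ) < β^2 := by positivity
      have h1 : Q/β^2 < 1 := (div_lt_one hβ2).2 (by simpa using hQβ)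
      have h2 : 0 < Q/β^2 := by positivity
      set κ := Real.sqrt ((Q/β^2 + 1)/2) with hκdef
      have hhalf : 0 < (Q/β^2 + 1)/2 := by linarith
      have hκpos : 0 < κ := Real.sqrt_pos.2 hhalf
      have hκlt : κ < 1 := by
        have ht : (Q/β^2 + 1)/2 < 1 := by linarith
        nlinarith [Real.sq_sqrt hhalf.le, Real.sqrt_nonneg ((Q/β^2 + 1)/2)]
      have hfin := hκQ κ hκpos hκlt
      rw [mul_pow, hκdef, Real.sq_sqrt hhalf.le] at hfin
      have hexp : (Q/β^2 + 1)/2 * β^2 = (Q + β^2)/2 := by field_simp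
      rw [hexp] at hfin
      linarith
    intro κ hκ0 hκ1
    -- choice of constants
    set L := Real.log κ⁻¹ with hLdef
    have hκinv : 1 < κ⁻¹ := (one_lt_inv₀ hκ0).2 hκ1
    have hL0 : 0 < L := Real.log_pos hκinv
    set c₁ := min (L/(4*(d:ℝ))) (1/4 : ℝ) with hc₁def
    have hc₁0 : 0 < c₁ := lt_min (by positivity) (by norm_num)
    have hc₁4 : c₁ ≤ 1/4 := min_le_right _ _
    have hc₁L : c₁ ≤ L/(4*(d:ℝ)) := min_le_left _ _
    set ε := β * c₁ / 4 with hεdef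
    have hε0 : 0 < ε := by positivity
    obtain ⟨δε, hδε0, hDm⟩ := hp ε hε0
    have hVU : V ∩ U ∈ 𝓝 x₀ := (hVopen.inter hUopen).mem_nhds ⟨hx₀V, hx₀U⟩
    obtain ⟨r₀, hr₀0, hr₀⟩ := Metric.nhds_basis_closedBall.mem_iff.mp hVU
    set δ := min (δε/2) r₀ with hδdef
    have hδ0 : 0 < δ := lt_min (by linarith) hr₀0
    have hδε' : δ < δε := lt_of_le_of_lt (min_le_left _ _) (by linarith)
    have hball : closedBall x₀ δ ⊆ V ∩ U :=
      (closedBall_subset_closedBall (min_le_right _ _)).trans hr₀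
    set R := δ / c₁ with hRdef
    have hR0 : 0 < R := by positivity
    have hδR : δ = c₁ * R := by rw [hRdef]; field_simp
    have hδR4 : δ ≤ R/4 := by nlinarith
    set μ := 2*(d:ℝ)/R^2 with hμdef
    have hμ0 : 0 < μ := div_pos (by linarith) (by positivity)
    have hμR2 : μ * R^2 = 2*(d:ℝ) := by rw [hμdef]; field_simp
    set z := x₀ + R • ((β⁻¹ : ℝ) • p) with hzdef
    have hsmul_norm : ‖R • ((β⁻¹ : ℝ) • p)‖ = R := by
      rw [norm_smul, norm_smul, Real.norm_eq_abs, Real.norm_eq_abs,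
        abs_of_pos hR0, abs_of_pos (inv_pos.2 hβ), ← hβdef]
      field_simp
    have hzx : ‖x₀ - z‖ = R := by
      calc ‖x₀ - z‖ = ‖z - x₀‖ := norm_sub_rev _ _
        _ = ‖R • ((β⁻¹ : ℝ) • p)‖ := by rw [hzdef, add_sub_cancel_left]
        _ = R := hsmul_norm
    set c := κ * β * Real.exp (μ * R^2) / (2*μ*R) with hcdef
    have hc0 : 0 < c :=
      div_pos (mul_pos (mul_pos hκ0 hβ) (Real.exp_pos _))
        (mul_pos (mul_pos two_pos hμ0) hR0)
    have hnorm : 2*c*μ*R*Real.exp (-μ * R^2) = κ * β := by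
      rw [hcdef, show -μ * R^2 = -(μ * R^2) by ring, Real.exp_neg]
      field_simp
    set b₀ := -(c * Real.exp (-μ * R^2)) with hb₀def
    set φ := fun y => Barrier.bar z μ c y + b₀ with hφdef
    have hφx₀ : φ x₀ = 0 := by
      simp only [hφdef, Barrier.bar, hb₀def, hzx]
      ring
    -- identity for the linear part
    have hkey_id : ∀ y : Rd d, (⟪p, y - x₀⟫ : ℝ)
        = β/(2*R) * (‖y - x₀‖^2 + R^2 - ‖y - z‖^2) := by
      intro y
      have h1 : y - z = (y - x₀) - R • ((β⁻¹:ℝ) • p) := by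
        rw [hzdef, sub_add_eq_sub_sub]
      have h2 : ‖y - z‖^2
          = ‖y - x₀‖^2 - 2 * ⟪y - x₀, R • ((β⁻¹:ℝ) • p)⟫ + ‖R • ((β⁻¹:ℝ) • p)‖^2 := by
        rw [h1]; exact norm_sub_sq_real _ _
      have h3 : (⟪y - x₀, R • ((β⁻¹:ℝ) • p)⟫ : ℝ) = R * β⁻¹ * ⟪p, y - x₀⟫ := by
        rw [real_inner_smul_right, real_inner_smul_right, real_inner_comm]; ring
      have h4 : ‖R • ((β⁻¹:ℝ) • p)‖^2 = R^2 := by rw [hsmul_norm]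
      rw [h2, h3, h4]
      field_simp
      ring
    -- boundary estimate
    have hbdry : ∀ y : Rd d, ‖y - x₀‖ = δ → φ y ≤ u y := by
      intro y hyδ
      have hymem : y ∈ closedBall x₀ δ := by
        rw [mem_closedBall, dist_eq_norm, hyδ]
      have hyU : y ∈ U := (hball hymem).2
      rcases le_or_gt (R^2) (‖y - z‖^2) with hcase | hcase
      · -- the barrier is nonpositive there
        have hmono : Real.exp (-μ * ‖y - z‖^2) ≤ Real.exp (-μ * R^2) :=
          Real.exp_le_exp.2 (mul_le_mul_of_nonpos_left hcase (neg_nonpos.2 hμ0.le))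
        have hφy : φ y ≤ 0 := by
          simp only [hφdef, Barrier.bar, hb₀def]
          nlinarith [hc0, hmono]
        exact hφy.trans (hunn y hyU)
      · -- compare with the linear lower bound from the subdifferential
        have hu_lb : (⟪p, y - x₀⟫ : ℝ) - ε * ‖y - x₀‖ ≤ u y :=
          hDm y (by rw [hyδ]; exact hδε')
        have hρlow : R - δ ≤ ‖y - z‖ := by
          have htri : dist x₀ z ≤ dist x₀ y + dist y z := dist_triangle _ _ _
          rw [dist_eq_norm, dist_eq_norm, dist_eq_norm, hzx] at htri
          have : ‖x₀ - y‖ = ‖y - x₀‖ := norm_sub_rev _ _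
          linarith [htri, this.le, this.ge, hyδ.le, hyδ.ge]
        have hρ2R : R^2 - ‖y - z‖^2 ≤ 2*R*δ := by
          have h0 : 0 ≤ R - δ := by linarith
          have h1 : (R - δ)^2 ≤ ‖y - z‖^2 := by nlinarith [hρlow, norm_nonneg (y - z)]
          nlinarith [hδ0]
        have hw_bound : μ * (R^2 - ‖y - z‖^2) ≤ L := by
          have h1 : μ * (R^2 - ‖y - z‖^2) ≤ μ * (2*R*δ) :=
            mul_le_mul_of_nonneg_left hρ2R hμ0.le
          have h2 : μ * (2*R*δ) = 4*(d:ℝ)*c₁ := by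
            rw [hμdef, hδR]; field_simp; ring
          have h3 : 4*(d:ℝ)*c₁ ≤ L := by
            have h4 : (0:ℝ) < 4*(d:ℝ) := by linarith
            calc 4*(d:ℝ)*c₁ ≤ 4*(d:ℝ)*(L/(4*(d:ℝ))) :=
                  mul_le_mul_of_nonneg_left hc₁L h4.le
              _ = L := by field_simp
          linarith
        set w := μ * (R^2 - ‖y - z‖^2) with hwdef
        have hw0 : 0 ≤ w := mul_nonneg hμ0.le (by linarith [hcase.le])
        have hexp2 : Real.exp w ≤ κ⁻¹ := by
          calc Real.exp w ≤ Real.exp L := Real.exp_le_exp.2 hw_bound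
            _ = κ⁻¹ := Real.exp_log (inv_pos.2 hκ0)
        have hexp3 : Real.exp w - 1 ≤ w * κ⁻¹ := exp_sub_one_le_mul hw0 hexp2
        have hφy : φ y ≤ β * (R^2 - ‖y - z‖^2)/(2*R) := by
          have hbar : φ y = c * Real.exp (-μ * R^2) * (Real.exp w - 1) := by
            simp only [hφdef, Barrier.bar, hb₀def]
            rw [show -μ * ‖y - z‖^2 = w + (-μ * R^2) by rw [hwdef]; ring, Real.exp_add]
            ring
          have hce : c * Real.exp (-μ * R^2) = κ*β/(2*μ*R) := by
            rw [hcdef, show -μ * R^2 = -(μ * R^2) by ring, Real.exp_neg]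
            field_simp
          have hfac : 0 ≤ κ*β/(2*μ*R) :=
            le_of_lt (div_pos (mul_pos hκ0 hβ) (by positivity))
          rw [hbar, hce]
          calc κ*β/(2*μ*R) * (Real.exp w - 1) ≤ κ*β/(2*μ*R) * (w * κ⁻¹) :=
                mul_le_mul_of_nonneg_left hexp3 hfac
            _ = β * (R^2 - ‖y - z‖^2)/(2*R) := by
                rw [hwdef, hμdef]; field_simp
        have hs := hkey_id y
        rw [hyδ] at hs
        have hεδ : ε = β * δ/(4*R) := by rw [hεdef, hδR]; field_simp
        have h9 : 0 ≤ β*δ^2/(4*R) :=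
          le_of_lt (div_pos (mul_pos hβ (pow_pos hδ0 2)) (by linarith))
        rw [hs, hεδ] at hu_lb
        rw [hyδ] at hu_lb
        calc φ y ≤ β*(R^2-‖y - z‖^2)/(2*R) := hφy
          _ = β/(2*R)*(δ^2+R^2-‖y - z‖^2) - β*δ/(4*R)*δ - β*δ^2/(4*R) := by
              field_simp; ring
          _ ≤ β/(2*R)*(δ^2+R^2-‖y - z‖^2) - β*δ/(4*R)*δ := by linarith [h9]
          _ ≤ u y := hu_lb
    -- minimize u - φ over the closed ball
    have hballU : closedBall x₀ δ ⊆ U := fun y hy => (hball hy).2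
    have hcont : ContinuousOn (fun y => u y - φ y) (closedBall x₀ δ) := by
      apply (hucont.mono hballU).sub
      exact (((Barrier.contDiff_bar z μ c).continuous.add continuous_const).continuousOn)
    obtain ⟨x₁, hx₁mem, hx₁min⟩ := (isCompact_closedBall x₀ δ).exists_isMinOn
      ⟨x₀, mem_closedBall_self hδ0.le⟩ hcont
    set m := u x₁ - φ x₁ with hmdef
    have hm0 : m ≤ 0 := by
      have h := isMinOn_iff.mp hx₁min x₀ (mem_closedBall_self hδ0.le)
      rw [hu₀, hφx₀] at h
      rw [hmdef]; linarith [h]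
    have hlb : ∀ y ∈ closedBall x₀ δ, φ y + m ≤ u y := fun y hy => by
      have := isMinOn_iff.mp hx₁min y hy
      linarith [this]
    -- generic application of the test-function hypothesis at a touching point
    have keyH : ∀ (b : ℝ) (w : Rd d), w ∈ V → w ∈ U → w ∈ frontier (PosSet u) →
        R - δ ≤ ‖w - z‖ → ‖w - z‖ ≤ R →
        (∀ᶠ y in 𝓝 w, Barrier.bar z μ c y + b ≤ u y) → u w = 0 →
        Barrier.bar z μ c w + b = 0 → (κ * β)^2 ≤ Q := by
      intro b w hwV hwU hwF hρ1 hρ2 hev hw0 hψ0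
      have hψC : ContDiff ℝ 2 (fun y => Barrier.bar z μ c y + b) :=
        (Barrier.contDiff_bar z μ c).add contDiff_const
      have hρR : (3:ℝ)/4 * R ≤ ‖w - z‖ := by linarith [hδR4]
      have hρ0 : 0 < ‖w - z‖ := by linarith [hR0]
      have hμρd : (9:ℝ)/8 * (d:ℝ) ≤ μ * ‖w - z‖^2 := by
        have e1 : (3/4*R)^2 ≤ ‖w - z‖^2 := by
          apply pow_le_pow_left₀ (by linarith) hρR
        have e2 : μ * (3/4*R)^2 ≤ μ * ‖w - z‖^2 := mul_le_mul_of_nonneg_left e1 hμ0.le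
        have e3 : μ * (3/4*R)^2 = 9/16*(μ*R^2) := by ring
        rw [e3, hμR2] at e2
        linarith
      have hμρ : (9:ℝ)/8 ≤ μ * ‖w - z‖^2 := by
        have h8 : (9:ℝ)/8 * 1 ≤ 9/8 * (d:ℝ) := by linarith
        linarith [hμρd]
      have hlapψ : 0 < lap (fun y => Barrier.bar z μ c y + b) w := by
        rw [lap_add_const, Barrier.lap_bar]
        exact lap_aux hc0 hμ0 hdR hμρd
      have hgrad : κ * β ≤ ‖gradient (fun y => Barrier.bar z μ c y + b) w‖ := by
        rw [gradient_add_const, Barrier.norm_gradient_bar z μ c w hc0.le hμ0.le, ← hnorm]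
        exact grad_aux hc0 hμ0 hρ2 hρ0 hμρ
      have hQ' := H (fun y => Barrier.bar z μ c y + b) hψC w ⟨hwV, hwF, hwU⟩
        (hev.filter_mono nhdsWithin_le_nhds) hw0 hψ0 hlapψ
      have hκβ : 0 ≤ κ * β := (mul_pos hκ0 hβ).le
      calc (κ*β)^2 ≤ ‖gradient (fun y => Barrier.bar z μ c y + b) w‖^2 :=
            pow_le_pow_left₀ hκβ hgrad 2
        _ ≤ Q := hQ'
    -- case analysis on the minimum value m
    rcases eq_or_lt_of_le hm0 with hmeq | hmlt
    · -- minimum is zero : touch at x₀ itself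
      apply keyH b₀ x₀ hx₀V hx₀U hx₀F
      · rw [hzx]; linarith
      · rw [hzx]
      · have hball𝓝 : closedBall x₀ δ ∈ 𝓝 x₀ := closedBall_mem_nhds _ hδ0
        filter_upwards [hball𝓝] with y hy
        have h := hlb y hy
        rw [hmeq] at h
        simpa [hφdef] using h
      · exact hu₀
      · have := hφx₀
        simpa [hφdef] using this
    · -- minimum is negative : interior touching point x₁
      have hx₁U : x₁ ∈ U := (hball hx₁mem).2
      have hx₁V : x₁ ∈ V := (hball hx₁mem).1
      have hx₁le : ‖x₁ - x₀‖ ≤ δ := by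
        rw [← dist_eq_norm]; exact mem_closedBall.mp hx₁mem
      have hx₁int : ‖x₁ - x₀‖ < δ := by
        rcases hx₁le.lt_or_eq with h | h
        · exact h
        · exfalso
          have := hbdry x₁ h
          rw [hmdef] at hmlt
          linarith
      have hρ1low : R - δ ≤ ‖x₁ - z‖ := by
        have htri : dist x₀ z ≤ dist x₀ x₁ + dist x₁ z := dist_triangle _ _ _
        rw [dist_eq_norm, dist_eq_norm, dist_eq_norm, hzx] at htri
        have hh : ‖x₀ - x₁‖ = ‖x₁ - x₀‖ := norm_sub_rev _ _
        linarith [htri, hh.le, hh.ge, hx₁le]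
      have hclosedBall𝓝 : closedBall x₀ δ ∈ 𝓝 x₁ := by
        apply mem_of_superset (isOpen_ball.mem_nhds _) ball_subset_closedBall
        rw [mem_ball, dist_eq_norm]; exact hx₁int
      rcases (hunn x₁ hx₁U).lt_or_eq with hu1 | hu1
      · -- u(x₁) > 0 : contradiction with superharmonicity
        exfalso
        have hloc : IsLocalMin (fun y => u y - φ y) x₁ := hx₁min.isLocalMin hclosedBall𝓝
        have hsup := husuper φ x₁ ⟨hu1, hx₁U⟩
          ((Barrier.contDiff_bar z μ c).add contDiff_const).contDiffAt hloc
        have hρRx : (3:ℝ)/4 * R ≤ ‖x₁ - z‖ := by linarith [hδR4, hρ1low]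
        have hμρd : (9:ℝ)/8 * (d:ℝ) ≤ μ * ‖x₁ - z‖^2 := by
          have e1 : (3/4*R)^2 ≤ ‖x₁ - z‖^2 := by
            apply pow_le_pow_left₀ (by linarith) hρRx
          have e2 : μ * (3/4*R)^2 ≤ μ * ‖x₁ - z‖^2 := mul_le_mul_of_nonneg_left e1 hμ0.le
          have e3 : μ * (3/4*R)^2 = 9/16*(μ*R^2) := by ring
          rw [e3, hμR2] at e2
          linarith
        have hlapφ : 0 < lap φ x₁ := by
          rw [hφdef, lap_add_const, Barrier.lap_bar]
          exact lap_aux hc0 hμ0 hdR hμρd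
        linarith [hsup, hlapφ]
      · -- u(x₁) = 0 : x₁ is a free boundary touching point
        have hφ₁ : φ x₁ = -m := by rw [hmdef, ← hu1]; ring
        have hρ₁R : ‖x₁ - z‖ ≤ R := by
          have hφ₁pos : 0 < φ x₁ := by rw [hφ₁]; linarith
          have h1 : Real.exp (-μ * R^2) < Real.exp (-μ * ‖x₁ - z‖^2) := by
            have h2 : c * Real.exp (-μ * R^2) < c * Real.exp (-μ * ‖x₁ - z‖^2) := by
              have := hφ₁pos
              rw [hφdef] at this
              simp only [Barrier.bar, hb₀def] at this
              linarith
            exact lt_of_mul_lt_mul_left h2 hc0.le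
          exact exp_le_exp_norm_le hμ0 (norm_nonneg _) hR0.le h1
        have hρ₁0 : 0 < ‖x₁ - z‖ := by linarith [hρ1low, hδR4, hR0]
        -- x₁ lies in the closure of the positivity set
        have hclos : x₁ ∈ closure (PosSet u) := by
          rw [mem_closure_iff_nhds]
          intro t ht
          have hcont2 : ContinuousAt (fun θ : ℝ => x₁ + θ • (z - x₁)) 0 :=
            (continuous_const.add (continuous_id.smul continuous_const)).continuousAt
          have hmem0 : (fun θ : ℝ => x₁ + θ • (z - x₁)) 0 = x₁ := by simp
          have hnb : t ∩ ball x₀ δ ∈ 𝓝 x₁ :=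
            inter_mem ht (isOpen_ball.mem_nhds (by rw [mem_ball, dist_eq_norm]; exact hx₁int))
          have hpre : (fun θ : ℝ => x₁ + θ • (z - x₁)) ⁻¹' (t ∩ ball x₀ δ) ∈ 𝓝 (0:ℝ) :=
            hcont2 (by rw [hmem0]; exact hnb)
          obtain ⟨θ₀, hθ₀0, hθ₀⟩ := Metric.mem_nhds_iff.mp hpre
          set θ := min (θ₀/2) (1/2 : ℝ) with hθdef
          have hθpos : 0 < θ := lt_min (by linarith) one_half_pos
          have hθhalf : θ ≤ 1/2 := min_le_right _ _
          have hθball : θ ∈ ball (0:ℝ) θ₀ := by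
            rw [mem_ball, Real.dist_eq, sub_zero, abs_of_pos hθpos]
            calc θ ≤ θ₀/2 := min_le_left _ _
              _ < θ₀ := by linarith
          obtain ⟨hty, hbally⟩ := hθ₀ hθball
          refine ⟨x₁ + θ • (z - x₁), hty, ?_⟩
          have hyball : x₁ + θ • (z - x₁) ∈ closedBall x₀ δ := ball_subset_closedBall hbally
          have hnormy : ‖(x₁ + θ • (z - x₁)) - z‖ = (1 - θ)*‖x₁ - z‖ := by
            have hid : (x₁ + θ • (z - x₁)) - z = (1 - θ) • (x₁ - z) := by
              module
            rw [hid, norm_smul, Real.norm_eq_abs, abs_of_pos (by linarith : (0:ℝ) < 1 - θ)]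
          have hexpy : Real.exp (-μ * ‖x₁ - z‖^2)
              < Real.exp (-μ * ‖(x₁ + θ • (z - x₁)) - z‖^2) := by
            rw [hnormy]
            exact exp_scale_lt hμ0 hρ₁0 hθpos hθhalf
          have hφy : φ x₁ < φ (x₁ + θ • (z - x₁)) := by
            simp only [hφdef, Barrier.bar]
            have := mul_lt_mul_of_pos_left hexpy hc0
            linarith
          have hupos : 0 < u (x₁ + θ • (z - x₁)) := by
            have h6 := hlb _ hyball
            rw [hφ₁] at hφy
            linarith
          exact hupos
        have hnoti : x₁ ∉ interior (PosSet u) := by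
          intro hh
          have h7 : x₁ ∈ PosSet u := interior_subset hh
          have h8 : 0 < u x₁ := h7
          linarith [hu1.le, hu1.ge]
        have hfront : x₁ ∈ frontier (PosSet u) := ⟨hclos, hnoti⟩
        apply keyH (b₀ + m) x₁ hx₁V hx₁U hfront hρ1low hρ₁R
        · filter_upwards [hclosedBall𝓝] with y hy
          have h9 := hlb y hy
          rw [hφdef] at h9
          simp only at h9
          linarith [h9]
        · exact hu1.symm
        · rw [show Barrier.bar z μ c x₁ + (b₀ + m) = φ x₁ + m by rw [hφdef]; ring]
          rw [hφ₁]; ring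
end
end

section
/- Let Ω ⊆ ℝ^d be open and let u : Ω → ℝ be continuous and subharmonic in the viscosity sense on Ω. For r > 0 define the sup-convolution u_r(x) := sup{u(y) : |y − x| ≤ r} on the open set Ω_r := {x ∈ ℝ^d : the closed ball of radius r centered at x is contained in Ω}. Then u_r is continuous and subharmonic in the viscosity sense on Ω_r. -/
open Set Metric Filter
open scoped RealInnerProductSpace Topology Pointwise

noncomputable section

theorem my_diffAt_translate {E F : Type*} [NormedAddCommGroup E] [NormedSpace ℝ E]
    [NormedAddCommGroup F] [NormedSpace ℝ F]
    {f : E → F} {c y : E} (h : DifferentiableAt ℝ f (y + c)) :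
    DifferentiableAt ℝ (fun z => f (z + c)) y :=
  h.comp y ((differentiableAt_id).add_const c)

theorem my_fderiv_translate {E F : Type*} [NormedAddCommGroup E] [NormedSpace ℝ E]
    [NormedAddCommGroup F] [NormedSpace ℝ F] (f : E → F) (c y : E) :
    fderiv ℝ (fun z => f (z + c)) y = fderiv ℝ f (y + c) := by
  by_cases h : DifferentiableAt ℝ f (y + c)
  · have h2 : HasFDerivAt (fun z : E => z + c) (ContinuousLinearMap.id ℝ E) y :=
      (hasFDerivAt_id y).add_const c
    have := (h.hasFDerivAt.comp y h2).fderiv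
    simpa [Function.comp_def] using this
  · have h' : ¬ DifferentiableAt ℝ (fun z => f (z + c)) y := by
      intro hg
      have : DifferentiableAt ℝ (fun w : E => (fun z => f (z + c)) (w + (-c))) (y + c) :=
        my_diffAt_translate (f := fun z => f (z + c)) (c := -c) (y := y + c)
          (by simpa using hg)
      simp only [neg_add_cancel_right] at this
      exact h this
    rw [fderiv_zero_of_not_differentiableAt h, fderiv_zero_of_not_differentiableAt h']

theorem my_lap_translate {d : ℕ} (φ : Rd d → ℝ) (c y : Rd d) :
    lap (fun z => φ (z + c)) y = lap φ (y + c) := by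
  unfold lap
  refine Finset.sum_congr rfl fun i _ => ?_
  have h1 : (fun z => fderiv ℝ (fun w => φ (w + c)) z (EuclideanSpace.single i (1:ℝ)))
      = fun z => fderiv ℝ φ (z + c) (EuclideanSpace.single i (1:ℝ)) := by
    funext z
    rw [my_fderiv_translate]
  have h2 : fderiv ℝ (fun z => fderiv ℝ φ (z + c) (EuclideanSpace.single i (1:ℝ))) y
      = fderiv ℝ (fun z => fderiv ℝ φ z (EuclideanSpace.single i (1:ℝ))) (y + c) :=
    my_fderiv_translate (fun w => fderiv ℝ φ w (EuclideanSpace.single i (1:ℝ))) c y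
  rw [h1, h2]

/-- key Lipschitz-type estimate for the sup-convolution -/
theorem my_sup_le_sup_add {d : ℕ} (u : Rd d → ℝ) (K : Set (Rd d))
    (huK : ContinuousOn u K) {r ε η : ℝ} (hr : 0 < r)
    (hη : ∀ a ∈ K, ∀ b ∈ K, dist a b < η → dist (u a) (u b) < ε)
    {x x' : Rd d} (hx : closedBall x r ⊆ K) (hx' : closedBall x' r ⊆ K)
    (hd : dist x x' < η) :
    sSup (u '' closedBall x r) ≤ sSup (u '' closedBall x' r) + ε := by
  have bdd : BddAbove (u '' closedBall x' r) :=
    ((isCompact_closedBall x' r).image_of_continuousOn (huK.mono hx')).bddAbove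
  refine csSup_le (((nonempty_closedBall).mpr hr.le).image u) ?_
  rintro _ ⟨y, hy, rfl⟩
  set y' := y + (x' - x) with hy'def
  have hy' : y' ∈ closedBall x' r := by
    have e : y + (x' - x) - x' = y - x := by abel
    simp only [mem_closedBall] at hy ⊢
    rw [dist_eq_norm, hy'def, e, ← dist_eq_norm]
    exact hy
  have hdyy' : dist y y' < η := by
    have e : y - (y + (x' - x)) = x - x' := by abel
    rw [dist_eq_norm, hy'def, e, ← dist_eq_norm]
    exact hd
  have h1 : dist (u y) (u y') < ε := hη y (hx hy) y' (hx' hy') hdyy'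
  have h2 : u y' ≤ sSup (u '' closedBall x' r) :=
    le_csSup bdd (mem_image_of_mem u hy')
  have := abs_lt.mp (by rwa [Real.dist_eq] at h1)
  linarith [this.2]

theorem my_setup {d : ℕ} (Ω : Set (Rd d)) (hΩopen : IsOpen Ω) {r : ℝ} (hr : 0 < r)
    (x₀ : Rd d) (hx₀ : closedBall x₀ r ⊆ Ω) :
    ∃ δ > (0:ℝ), closedBall x₀ (r + δ) ⊆ Ω := by
  obtain ⟨δ, hδ, hδΩ⟩ :=
    (isCompact_closedBall x₀ r).exists_thickening_subset_open hΩopen hx₀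
  rw [thickening_closedBall hδ hr.le] at hδΩ
  refine ⟨δ / 2, by positivity, fun z hz => hδΩ ?_⟩
  simp only [mem_closedBall] at hz
  simp only [mem_ball]
  linarith

theorem my_cont_part
    {d : ℕ} (Ω : Set (Rd d)) (hΩopen : IsOpen Ω)
    (u : Rd d → ℝ) (hucont : ContinuousOn u Ω) (r : ℝ) (hr : 0 < r) :
    ContinuousOn (fun x => sSup (u '' Metric.closedBall x r))
      {x : Rd d | Metric.closedBall x r ⊆ Ω} := by
  set v : Rd d → ℝ := fun x => sSup (u '' Metric.closedBall x r) with hv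
  intro x₀ hx₀
  obtain ⟨δ, hδ, hK⟩ := my_setup Ω hΩopen hr x₀ hx₀
  have huK : ContinuousOn u (closedBall x₀ (r + δ)) := hucont.mono hK
  have hUC := (isCompact_closedBall x₀ (r + δ)).uniformContinuousOn_of_continuous huK
  rw [Metric.uniformContinuousOn_iff] at hUC
  rw [Metric.continuousWithinAt_iff]
  intro ε hε
  obtain ⟨η, hη, hηuc⟩ := hUC (ε / 2) (by positivity)
  refine ⟨min η δ, lt_min hη hδ, fun {x'} _ hx'd => ?_⟩
  have hx'K : closedBall x' r ⊆ closedBall x₀ (r + δ) := by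
    intro z hz
    simp only [mem_closedBall] at hz ⊢
    have h3 := dist_triangle z x' x₀
    have h4 : dist x' x₀ < δ := lt_of_lt_of_le hx'd (min_le_right _ _)
    linarith
  have hx₀K : closedBall x₀ r ⊆ closedBall x₀ (r + δ) := fun z hz => by
    simp only [mem_closedBall] at hz ⊢; linarith
  have hdd : dist x' x₀ < η := lt_of_lt_of_le hx'd (min_le_left _ _)
  have h1 := my_sup_le_sup_add u _ huK hr hηuc hx'K hx₀K hdd
  have h2 := my_sup_le_sup_add u _ huK hr hηuc hx₀K hx'K (by rwa [dist_comm])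
  rw [Real.dist_eq, abs_lt]
  constructor <;> simp only [hv] <;> linarith

set_option maxHeartbeats 1000000 in
theorem my_sub_part
    {d : ℕ} (Ω : Set (Rd d)) (hΩopen : IsOpen Ω)
    (u : Rd d → ℝ) (hucont : ContinuousOn u Ω)
    (hu : ViscSubharmonicOn u Ω) (r : ℝ) (hr : 0 < r) :
    ViscSubharmonicOn (fun x => sSup (u '' Metric.closedBall x r))
      {x : Rd d | Metric.closedBall x r ⊆ Ω} := by
  set v : Rd d → ℝ := fun x => sSup (u '' Metric.closedBall x r) with hv
  intro φ x₀ hx₀ hφ hmax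
  obtain ⟨δ, hδ, hK⟩ := my_setup Ω hΩopen hr x₀ hx₀
  have huK : ContinuousOn u (closedBall x₀ (r + δ)) := hucont.mono hK
  -- the sup is attained at some y₀
  obtain ⟨y₀, hy₀B, hy₀max⟩ := (isCompact_closedBall x₀ r).exists_isMaxOn
    ⟨x₀, mem_closedBall_self hr.le⟩ (hucont.mono hx₀)
  have bdd0 : BddAbove (u '' closedBall x₀ r) :=
    ((isCompact_closedBall x₀ r).image_of_continuousOn (hucont.mono hx₀)).bddAbove
  have hval : v x₀ = u y₀ := by
    refine le_antisymm (csSup_le (((nonempty_closedBall).mpr hr.le).image u) ?_)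
      (le_csSup bdd0 (mem_image_of_mem u hy₀B))
    rintro _ ⟨z, hz, rfl⟩
    exact hy₀max hz
  set c := x₀ - y₀ with hc
  have hyc : y₀ + c = x₀ := by simp [hc]
  set ψ : Rd d → ℝ := fun z => φ (z + c) with hψdef
  have hψ : ContDiffAt ℝ 2 ψ y₀ := by
    have htr : ContDiffAt ℝ 2 (fun z : Rd d => z + c) y₀ :=
      (contDiff_id.add contDiff_const).contDiffAt
    have hφ' : ContDiffAt ℝ 2 φ (y₀ + c) := by rw [hyc]; exact hφ
    exact hφ'.comp y₀ htr
  have hy₀Ω : y₀ ∈ Ω := hx₀ hy₀B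
  have hT : Tendsto (fun y : Rd d => y + c) (𝓝 y₀) (𝓝 x₀) := by
    rw [← hyc]; exact tendsto_id.add_const c
  have hball : ∀ᶠ y in 𝓝 y₀, (y + c) ∈ ball x₀ δ :=
    hT.eventually (Filter.eventually_mem_set.mpr (ball_mem_nhds x₀ hδ))
  have hmax' : ∀ᶠ y in 𝓝 y₀, v (y + c) - φ (y + c) ≤ v x₀ - φ x₀ :=
    hT.eventually hmax
  have hlm : IsLocalMax (fun y => u y - ψ y) y₀ := by
    filter_upwards [hball, hmax'] with y h1 h2
    have hsub : closedBall (y + c) r ⊆ closedBall x₀ (r + δ) := by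
      intro z hz
      simp only [mem_closedBall] at hz ⊢
      have h3 := dist_triangle z (y + c) x₀
      simp only [mem_ball] at h1
      linarith
    have bdd : BddAbove (u '' closedBall (y + c) r) :=
      ((isCompact_closedBall (y + c) r).image_of_continuousOn (huK.mono hsub)).bddAbove
    have hymem : y ∈ closedBall (y + c) r := by
      simp only [mem_closedBall]
      have e : y - (y + c) = -(x₀ - y₀) := by rw [hc]; abel
      rw [dist_eq_norm, e, norm_neg, ← dist_eq_norm]
      rw [mem_closedBall] at hy₀B
      rw [dist_comm]
      exact hy₀B
    have huy : u y ≤ v (y + c) := le_csSup bdd (mem_image_of_mem u hymem)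
    have eψ : ψ y₀ = φ x₀ := by rw [hψdef]; simp [hyc]
    simp only [hψdef]
    calc u y - φ (y + c) ≤ v (y + c) - φ (y + c) := by linarith
      _ ≤ v x₀ - φ x₀ := h2
      _ = u y₀ - φ (y₀ + c) := by rw [hval, hyc]
  have key := hu ψ y₀ hy₀Ω hψ hlm
  have : lap ψ y₀ = lap φ x₀ := by
    rw [hψdef, my_lap_translate, hyc]
  linarith

theorem sup_convolution_subharmonic
    {d : ℕ} (Ω : Set (Rd d)) (hΩopen : IsOpen Ω)
    (u : Rd d → ℝ) (hucont : ContinuousOn u Ω)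
    (hu : ViscSubharmonicOn u Ω) (r : ℝ) (hr : 0 < r) :
    ContinuousOn (fun x => sSup (u '' Metric.closedBall x r))
      {x : Rd d | Metric.closedBall x r ⊆ Ω} ∧
    ViscSubharmonicOn (fun x => sSup (u '' Metric.closedBall x r))
      {x : Rd d | Metric.closedBall x r ⊆ Ω} :=
  ⟨my_cont_part Ω hΩopen u hucont r hr, my_sub_part Ω hΩopen u hucont hu r hr⟩
end
end

section
/- Let d ≥ 1, let Ω be a nonempty subset of ℝ^d, and let δ > 0 be such that Ω is star-convex with respect to every point y ∈ ℝ^d with |y| < δ, i.e., for every such y, every x ∈ Ω, and all real a, b ≥ 0 with a + b = 1, one has a·y + b·x ∈ Ω. Then for every λ > 1 the closure of Ω is contained in the dilation λ • Ω = {λx : x ∈ Ω}. -/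
open Set Metric Filter
open scoped RealInnerProductSpace Topology Pointwise

noncomputable section

/-- the closure of a strongly star-shaped set (star-convex with respect to
every point of the ball `B(0,δ)`) is contained in every outward dilation `λ • Ω`, `λ > 1`. -/
theorem strongly_starshaped_closure_subset_dilation
    {d : ℕ} (hd : 1 ≤ d) (Ω : Set (Rd d)) (hne : Ω.Nonempty)
    (δ : ℝ) (hδ : 0 < δ)
    (hstar : ∀ y : Rd d, ‖y‖ < δ → ∀ x ∈ Ω, ∀ a b : ℝ, 0 ≤ a → 0 ≤ b → a + b = 1 →
      a • y + b • x ∈ Ω) :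
    ∀ lam : ℝ, 1 < lam → closure Ω ⊆ lam • Ω := by
  intro lam hlam z hz
  have hl0 : 0 < lam := lt_trans one_pos hlam
  set a : ℝ := 1 - 1/lam with ha
  have ha0 : 0 < a := by
    have : 1/lam < 1 := by rw [div_lt_one hl0]; exact hlam
    simp only [ha]; linarith
  have hε : 0 < δ * a * lam := by positivity
  obtain ⟨x', hx', hd'⟩ := Metric.mem_closure_iff.mp hz _ hε
  rw [dist_eq_norm] at hd'
  set y : Rd d := (1/(lam*a)) • (z - x') with hy
  have hyn : ‖y‖ < δ := by
    rw [hy, norm_smul, Real.norm_eq_abs, abs_of_pos (by positivity : (0:ℝ) < 1/(lam*a))]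
    rw [div_mul_eq_mul_div, one_mul, div_lt_iff₀ (by positivity)]
    calc ‖z - x'‖ < δ * a * lam := hd'
    _ = δ * (lam * a) := by ring
  have hmem := hstar y hyn x' hx' a (1/lam) ha0.le (by positivity) (by rw [ha]; field_simp; ring)
  refine ⟨a • y + (1/lam) • x', hmem, ?_⟩
  rw [hy]
  have hla : lam * a ≠ 0 := by positivity
  have hl : lam ≠ 0 := ne_of_gt hl0
  match_scalars <;> field_simp <;> ring
end
end

section
/- Let uₙ, u : ℝ^d → [0,∞) be continuous functions with uₙ → u locally uniformly, and let c₀, r̄ > 0 be such that for every n, every z in the topological frontier of {uₙ > 0}, and every r ∈ (0, r̄], one has sup{uₙ(y) : |y − z| ≤ r} ≥ c₀ r. If zₙ belongs to the frontier of {uₙ > 0} for each n and zₙ → z, then z belongs to the frontier of {u > 0}. -/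
open Set Metric Filter
open scoped RealInnerProductSpace Topology Pointwise

noncomputable section

/-- free boundary points persist under locally uniform limits of uniformly
non-degenerate nonnegative continuous functions. -/
theorem free_boundary_persists_in_limit
    {d : ℕ} (un : ℕ → Rd d → ℝ) (u : Rd d → ℝ)
    (huncont : ∀ n, Continuous (un n)) (hucont : Continuous u)
    (hunnn : ∀ n x, 0 ≤ un n x) (hunn : ∀ x, 0 ≤ u x)
    (hconv : TendstoLocallyUniformly un u Filter.atTop)
    (c₀ rbar : ℝ) (hc₀ : 0 < c₀) (hrbar : 0 < rbar)
    (hnd : ∀ n, ∀ z ∈ frontier (PosSet (un n)), ∀ r : ℝ, 0 < r → r ≤ rbar →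
      c₀ * r ≤ sSup (un n '' Metric.closedBall z r))
    (zn : ℕ → Rd d) (hzn : ∀ n, zn n ∈ frontier (PosSet (un n)))
    (z : Rd d) (hz : Filter.Tendsto zn Filter.atTop (nhds z)) :
    z ∈ frontier (PosSet u) := by
  have hPosOpen : IsOpen (PosSet u) := isOpen_lt continuous_const hucont
  have huz : u z = 0 := by
    have h0 : ∀ n, un n (zn n) = 0 := by
      intro n
      have hO : IsOpen (PosSet (un n)) := isOpen_lt continuous_const (huncont n)
      have hmem := hzn n
      rw [hO.frontier_eq] at hmem
      exact le_antisymm (not_lt.1 hmem.2) (hunnn n _)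
    have hlim : Tendsto (fun n => un n (zn n)) atTop (nhds (u z)) :=
      hconv.tendsto_comp hucont.continuousAt hz
    have hlim0 : Tendsto (fun n => un n (zn n)) atTop (nhds 0) := by
      simp only [h0]; exact tendsto_const_nhds
    exact tendsto_nhds_unique hlim hlim0
  have hzcl : z ∈ closure (PosSet u) := by
    rw [Metric.mem_closure_iff]
    intro ε hε
    set r : ℝ := min rbar (ε / 4) with hr
    have hrpos : 0 < r := lt_min hrbar (by linarith)
    have hrle : r ≤ rbar := min_le_left _ _
    have hrε : r ≤ ε / 4 := min_le_right _ _
    have hK : IsCompact (Metric.closedBall z ε) := isCompact_closedBall z ε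
    have hunif : TendstoUniformlyOn un u atTop (Metric.closedBall z ε) :=
      (tendstoLocallyUniformly_iff_forall_isCompact.1 hconv) _ hK
    rw [Metric.tendstoUniformlyOn_iff] at hunif
    have h1 := hunif (c₀ * r / 2) (by positivity)
    have h2 : ∀ᶠ n in atTop, dist (zn n) z < ε / 4 :=
      (Metric.tendsto_nhds.1 hz) (ε / 4) (by linarith)
    obtain ⟨n, hn1, hn2⟩ := (h1.and h2).exists
    -- the ball around zn n of radius r is inside closedBall z ε
    have hball : Metric.closedBall (zn n) r ⊆ Metric.closedBall z ε := by
      intro y hy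
      have : dist y z ≤ dist y (zn n) + dist (zn n) z := dist_triangle _ _ _
      have hy' : dist y (zn n) ≤ r := Metric.mem_closedBall.1 hy
      have : dist y z ≤ r + ε / 4 := by linarith
      exact Metric.mem_closedBall.2 (by linarith)
    -- sup attained
    have hsup := hnd n (zn n) (hzn n) r hrpos hrle
    have hcomp : IsCompact (un n '' Metric.closedBall (zn n) r) :=
      (isCompact_closedBall _ _).image (huncont n)
    have hne : (un n '' Metric.closedBall (zn n) r).Nonempty :=
      ⟨un n (zn n), ⟨zn n, Metric.mem_closedBall_self hrpos.le, rfl⟩⟩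
    have hmem := hcomp.sSup_mem hne
    obtain ⟨y, hy, hyv⟩ := hmem
    have hyK : y ∈ Metric.closedBall z ε := hball hy
    have hclose := hn1 y hyK
    have huy : c₀ * r / 2 < u y := by
      have : un n y - u y ≤ |u y - un n y| := by
        rw [abs_sub_comm]; exact le_abs_self _
      have habs : |u y - un n y| < c₀ * r / 2 := by
        rw [← Real.dist_eq]; exact hclose
      have : c₀ * r ≤ un n y := hyv ▸ hsup
      linarith
    refine ⟨y, ?_, ?_⟩
    · exact lt_of_le_of_lt (by positivity) huy
    · have hy' : dist y (zn n) ≤ r := Metric.mem_closedBall.1 hy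
      have : dist z y ≤ dist y (zn n) + dist (zn n) z := by
        rw [dist_comm]; exact dist_triangle _ _ _
      linarith
  rw [hPosOpen.frontier_eq]
  exact ⟨hzcl, by simp [PosSet, huz]⟩
end
end
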